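/- arXiv:2205.04654 — 5 statements merged into one kernel-verified Lean document; each statement's English description precedes it below -/
import Mathlib

section
/- Let p : ℤ → ℝ, v ∈ ℝ, and (t_0, x_0) ∈ ℝ × 𝕋. If Π(v) is non-empty, then there exists a non-trivial solution u of ∂_t u = iP(D)u (with u_0 ≠ 0 in L²(𝕋)) satisfying u(t_0+t, x_0 − vt) = 0 for all t ∈ ℝ; in particular, the unique continuation property from the line segment fails. One may take u_0(x) = e^{−i(p(k_1)t_0 + k_1 x_0)} e^{i k_1 x} − e^{−i(p(k_2)t_0 + k_2 x_0)} e^{i k_2 x} for any k_1 ≠ k_2 with λ_{k_1}(v) = λ_{k_2}(v). -/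
open MeasureTheory Real Complex
open scoped ENNReal

noncomputable def lamk (p : ℤ → ℝ) (v : ℝ) (k : ℤ) : ℝ := p k - k * v
def XiSet (p : ℤ → ℝ) (v : ℝ) (k : ℤ) : Set ℤ := {m | lamk p v m = lamk p v k}
def PiV (p : ℤ → ℝ) (v : ℝ) : Set ℤ := {k | ∃ m : ℤ, m ≠ k ∧ lamk p v k = lamk p v m}
def LamV (p : ℤ → ℝ) (v : ℝ) : Set ℝ := Set.range (lamk p v)
noncomputable def gammaP (p : ℤ → ℝ) (v : ℝ) : ℝ≥0∞ :=
  ⨆ (W : Finset ℝ) (_ : ↑W ⊆ LamV p v),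
    ⨅ (a : ℝ) (_ : a ∈ LamV p v \ ↑W) (b : ℝ) (_ : b ∈ LamV p v \ ↑W) (_ : a ≠ b),
      ENNReal.ofReal |a - b|
noncomputable def solD (p : ℤ → ℝ) (c : ℤ → ℂ) (t x : ℝ) : ℂ :=
  ∑' k : ℤ, c k * Complex.exp (Complex.I * ((p k : ℂ) * (t : ℂ) + (k : ℂ) * (x : ℂ)))
noncomputable def specC (p : ℤ → ℝ) (t0 x0 : ℝ) (k1 k2 : ℤ) : ℤ → ℂ := fun k =>
  if k = k1 then Complex.exp (-(Complex.I * ((p k1 : ℂ) * (t0 : ℂ) + (k1 : ℂ) * (x0 : ℂ))))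
  else if k = k2 then -Complex.exp (-(Complex.I * ((p k2 : ℂ) * (t0 : ℂ) + (k2 : ℂ) * (x0 : ℂ))))
  else 0

/-! Along the line `(t₀ + t, x₀ - vt)` the `k`-th mode of the solution equals
`c_k e^{i(p(k)t₀ + kx₀)} e^{iλ_k(v)t}`. The datum `specC` cancels the phases at `(t₀, x₀)`, so the
restriction is `e^{iλ_{k₁}(v)t} - e^{iλ_{k₂}(v)t}`, which vanishes identically as soon as
`λ_{k₁}(v) = λ_{k₂}(v)`, while the datum itself is a nonzero trigonometric polynomial. -/

noncomputable def modePhase (p : ℤ → ℝ) (t0 x0 : ℝ) (k : ℤ) : ℂ :=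
  exp (I * ((p k : ℂ) * t0 + (k : ℂ) * x0))

theorem solD_line_eq_tsum (p : ℤ → ℝ) (c : ℤ → ℂ) (v t0 x0 t : ℝ) :
    solD p c (t0 + t) (x0 - v * t) =
      ∑' k, c k * modePhase p t0 x0 k * exp (I * lamk p v k * t) := by
  refine tsum_congr fun k => ?_
  rw [modePhase, mul_assoc, ← Complex.exp_add, lamk]
  push_cast
  ring_nf

theorem specC_mul_modePhase (p : ℤ → ℝ) (t0 x0 : ℝ) (k1 k2 k : ℤ) :
    specC p t0 x0 k1 k2 k * modePhase p t0 x0 k =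
      if k = k1 then 1 else if k = k2 then -1 else 0 := by
  unfold specC modePhase
  split_ifs with h1 h2
  · rw [h1, ← Complex.exp_add, neg_add_cancel, Complex.exp_zero]
  · rw [h2, neg_mul, ← Complex.exp_add, neg_add_cancel, Complex.exp_zero]
  · exact zero_mul _

theorem specC_support_subset (p : ℤ → ℝ) (t0 x0 : ℝ) (k1 k2 : ℤ) :
    Function.support (specC p t0 x0 k1 k2) ⊆ {k1, k2} := by
  intro k hk
  by_contra hk12
  simp only [Set.mem_insert_iff, Set.mem_singleton_iff, not_or] at hk12
  exact hk (by simp [specC, hk12.1, hk12.2])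

theorem memℓp_specC (p : ℤ → ℝ) (t0 x0 : ℝ) (k1 k2 : ℤ) (q : ℝ≥0∞) :
    Memℓp (specC p t0 x0 k1 k2) q :=
  (memℓp_zero ((Set.toFinite _).subset (specC_support_subset p t0 x0 k1 k2))).of_exponent_ge
    (zero_le (a := q))

theorem specC_ne_zero (p : ℤ → ℝ) (t0 x0 : ℝ) (k1 k2 : ℤ) : specC p t0 x0 k1 k2 ≠ 0 :=
  fun h => by simpa [specC, Complex.exp_ne_zero] using congrFun h k1

theorem solD_specC_line (p : ℤ → ℝ) (v t0 x0 : ℝ) {k1 k2 : ℤ} (h12 : k1 ≠ k2) (t : ℝ) :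
    solD p (specC p t0 x0 k1 k2) (t0 + t) (x0 - v * t) =
      exp (I * lamk p v k1 * t) - exp (I * lamk p v k2 * t) := by
  simp_rw [solD_line_eq_tsum, specC_mul_modePhase]
  rw [tsum_eq_sum (s := {k1, k2}) fun k hk => by simp_all, Finset.sum_pair h12]
  simp [h12.symm, sub_eq_add_neg]

/-- If Π(v) ≠ ∅ there is a nontrivial solution vanishing on the whole line segment;
one may take the explicit datum `specC` for any k₁ ≠ k₂ with λ_{k₁}(v) = λ_{k₂}(v). -/
theorem stmt_5 (p : ℤ → ℝ) (v : ℝ) (t0 x0 : ℝ) (hne : (PiV p v).Nonempty) :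
    (∃ c : ℤ → ℂ, Memℓp c 2 ∧ c ≠ 0 ∧
      ∀ t : ℝ, solD p c (t0 + t) (x0 - v * t) = 0) ∧
    (∀ k1 k2 : ℤ, k1 ≠ k2 → lamk p v k1 = lamk p v k2 →
      Memℓp (specC p t0 x0 k1 k2) 2 ∧ specC p t0 x0 k1 k2 ≠ 0 ∧
      ∀ t : ℝ, solD p (specC p t0 x0 k1 k2) (t0 + t) (x0 - v * t) = 0) := by
  have hspec : ∀ k1 k2 : ℤ, k1 ≠ k2 → lamk p v k1 = lamk p v k2 →
      Memℓp (specC p t0 x0 k1 k2) 2 ∧ specC p t0 x0 k1 k2 ≠ 0 ∧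
      ∀ t : ℝ, solD p (specC p t0 x0 k1 k2) (t0 + t) (x0 - v * t) = 0 :=
    fun k1 k2 h12 hlam => ⟨memℓp_specC p t0 x0 k1 k2 2, specC_ne_zero p t0 x0 k1 k2,
      fun t => by rw [solD_specC_line p v t0 x0 h12, hlam, sub_self]⟩
  obtain ⟨k, m, hmk, hlam⟩ := hne
  exact ⟨⟨specC p t0 x0 k m, hspec k m hmk.symm hlam⟩, hspec⟩
end

section
/- Let p : ℤ → ℝ satisfy (H1) and (H2), and let v_1 ≠ v_2 be real numbers. Then every vertex of the reduced graph G̃(v_1,v_2) is incident with both a red edge and a blue edge of G̃(v_1,v_2). -/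
open MeasureTheory Real Complex
open scoped ENNReal

/-- Hypothesis (H1): n_k(v) < ∞ for all k, v. -/
def hypH1 (p : ℤ → ℝ) : Prop := ∀ (v : ℝ) (k : ℤ), (XiSet p v k).Finite

/-- Hypothesis (H2): for each v there is N with n_k(v) ≤ 2 for all k ≥ N. -/
def hypH2 (p : ℤ → ℝ) : Prop :=
  ∀ v : ℝ, ∃ N : ℕ, ∀ k : ℤ, (N : ℤ) ≤ k → (XiSet p v k).ncard ≤ 2

/-- Colored edges of the graph G(v₁,v₂): `true` = red (λ(v₁) agree), `false` = blue. -/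
def cedge (p : ℤ → ℝ) (v1 v2 : ℝ) (b : Bool) (k1 k2 : ℤ) : Prop :=
  k1 ≠ k2 ∧ lamk p (if b then v1 else v2) k1 = lamk p (if b then v1 else v2) k2

/-- There is a two-colored cycle of G(v₁,v₂) all of whose vertices lie in S. -/
def TwoColCycleIn (p : ℤ → ℝ) (v1 v2 : ℝ) (S : Set ℤ) : Prop :=
  ∃ (n : ℕ) (f : ZMod (n + 3) → ℤ) (col : ZMod (n + 3) → Bool),
    Function.Injective f ∧ (∀ i, f i ∈ S) ∧
    (∀ i, cedge p v1 v2 (col i) (f i) (f (i + 1))) ∧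
    ∃ i j, col i ≠ col j

/-- Adjacency in G(v₁,v₂) (edge of either color). -/
def gadj (p : ℤ → ℝ) (v1 v2 : ℝ) (k1 k2 : ℤ) : Prop := ∃ b, cedge p v1 v2 b k1 k2

/-- g(v₁,v₂) < ∞ : a uniform finite bound on the sizes of connected components. -/
def gFinite (p : ℤ → ℝ) (v1 v2 : ℝ) : Prop :=
  ∃ N : ℕ, ∀ k ∈ PiV p v1 ∪ PiV p v2,
    {m | Relation.ReflTransGen (gadj p v1 v2) k m}.Finite ∧
    {m | Relation.ReflTransGen (gadj p v1 v2) k m}.ncard ≤ N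

/-- k' is connected to k in color b (`true` = red, `false` = blue): k' = k, or there is
a finite path from k' to k whose last edge has color b. -/
def ConnTo (p : ℤ → ℝ) (v1 v2 : ℝ) (b : Bool) (k' k : ℤ) : Prop :=
  k' = k ∨ ∃ (n : ℕ) (f : Fin (n + 2) → ℤ) (col : Fin (n + 1) → Bool),
    Function.Injective f ∧
    (∀ i : Fin (n + 1), cedge p v1 v2 (col i) (f i.castSucc) (f i.succ)) ∧
    f 0 = k' ∧ f (Fin.last (n + 1)) = k ∧ col (Fin.last n) = b

/-- The vertex set of the b-portion (red-portion if b = true) of k in G(v₁,v₂). -/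
def Portion (p : ℤ → ℝ) (v1 v2 : ℝ) (b : Bool) (k : ℤ) : Set ℤ :=
  {k' | ConnTo p v1 v2 b k' k}

/-- The b-portion of k contains no two-colored cycle and has finitely many vertices. -/
def PortionGood (p : ℤ → ℝ) (v1 v2 : ℝ) (b : Bool) (k : ℤ) : Prop :=
  (Portion p v1 v2 b k).Finite ∧ ¬ TwoColCycleIn p v1 v2 (Portion p v1 v2 b k)

/-- The vertex set of the reduced graph G̃(v₁,v₂): vertices of G(v₁,v₂) whose
red-portion or blue-portion contains no two-colored cycle and is finite are removed. -/
def ReducedV (p : ℤ → ℝ) (v1 v2 : ℝ) : Set ℤ :=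
  (PiV p v1 ∪ PiV p v2) \
    {k | PortionGood p v1 v2 true k ∨ PortionGood p v1 v2 false k}

section Aux

variable (p : ℤ → ℝ) (v1 v2 : ℝ)

lemma eq_of_lam_eq {a b : ℤ} (hv : v1 ≠ v2) (h1 : lamk p v1 a = lamk p v1 b)
    (h2 : lamk p v2 a = lamk p v2 b) : a = b := by
  simp only [lamk] at h1 h2
  have e3 : ((a : ℝ) - b) * (v1 - v2) = 0 := by ring_nf; nlinarith [h1, h2]
  rcases mul_eq_zero.mp e3 with h | h
  · have : (a : ℝ) = b := by linarith
    exact_mod_cast this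
  · exact absurd (by linarith : v1 = v2) hv

lemma cedge_symm {bo : Bool} {a b : ℤ} (h : cedge p v1 v2 bo a b) : cedge p v1 v2 bo b a :=
  ⟨h.1.symm, h.2.symm⟩

lemma cedge_swap {bo : Bool} {a b : ℤ} : cedge p v2 v1 (!bo) a b ↔ cedge p v1 v2 bo a b := by
  cases bo <;> simp [cedge]

/-- Paths indexed by ℕ. -/
def NPath (g : ℕ → ℤ) (c : ℕ → Bool) (N : ℕ) : Prop :=
  Set.InjOn g (Set.Iic N) ∧ ∀ i, i < N → cedge p v1 v2 (c i) (g i) (g (i + 1))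

variable {p v1 v2}

lemma NPath.prefix {g c N M} (h : NPath p v1 v2 g c N) (hM : M ≤ N) : NPath p v1 v2 g c M :=
  ⟨h.1.mono (Set.Iic_subset_Iic.mpr hM), fun i hi => h.2 i (lt_of_lt_of_le hi hM)⟩

lemma ConnTo_of_NPath {g c N k bo} (h : NPath p v1 v2 g c N) (hN : 1 ≤ N)
    (hgN : g N = k) (hc : c (N - 1) = bo) : ConnTo p v1 v2 bo (g 0) k := by
  right
  obtain ⟨n, rfl⟩ : ∃ n, N = n + 1 := ⟨N - 1, by omega⟩
  refine ⟨n, fun i => g i.val, fun i => c i.val, ?_, ?_, rfl, ?_, ?_⟩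
  · intro i j hij
    exact Fin.ext (h.1 (by simp [Set.mem_Iic]; omega) (by simp [Set.mem_Iic]; omega) hij)
  · intro i
    have := h.2 i.val (by omega)
    simpa [Fin.castSucc, Fin.succ] using this
  · simpa using hgN
  · simpa using hc

lemma NPath_of_ConnTo {k' k : ℤ} {bo : Bool} (h : ConnTo p v1 v2 bo k' k) :
    k' = k ∨ ∃ N g c, 1 ≤ N ∧ NPath p v1 v2 g c N ∧ g 0 = k' ∧ g N = k ∧ c (N - 1) = bo := by
  rcases h with h | ⟨n, f, col, hinj, hedge, h0, hl, hcl⟩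
  · exact Or.inl h
  · right
    refine ⟨n + 1, fun i => f ⟨min i (n+1), by omega⟩, fun i => col ⟨min i n, by omega⟩,
      by omega, ⟨?_, ?_⟩, ?_, ?_, ?_⟩
    · intro i hi j hj hf
      simp only [Set.mem_Iic] at hi hj
      have := hinj hf
      have : min i (n+1) = min j (n+1) := congrArg Fin.val this
      omega
    · intro i hi
      have := hedge ⟨i, by omega⟩
      have e1 : min i (n+1) = i := by omega
      have e2 : min (i+1) (n+1) = i + 1 := by omega
      have e3 : min i n = i := by omega
      simpa [Fin.castSucc, Fin.succ, e1, e2, e3] using this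
    · simpa using h0
    · simpa [Fin.last] using hl
    · simpa [Fin.last] using hcl

end Aux

section Ops
variable {p : ℤ → ℝ} {v1 v2 : ℝ}

lemma NPath.append {g c N m bo} (h : NPath p v1 v2 g c N) (hm : ∀ i, i ≤ N → g i ≠ m)
    (he : cedge p v1 v2 bo (g N) m) :
    NPath p v1 v2 (fun i => if i ≤ N then g i else m) (fun i => if i < N then c i else bo)
      (N + 1) := by
  constructor
  · intro i hi j hj hij
    simp only [Set.mem_Iic] at hi hj
    by_cases h1 : i ≤ N <;> by_cases h2 : j ≤ N <;> simp only [h1, h2, if_pos, if_neg,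
      if_true, if_false] at hij
    · exact h.1 (Set.mem_Iic.mpr h1) (Set.mem_Iic.mpr h2) hij
    · exact absurd hij (hm i h1)
    · exact absurd hij.symm (hm j h2)
    · omega
  · intro i hi
    by_cases h1 : i < N
    · have e1 : i ≤ N := by omega
      have e2 : i + 1 ≤ N := by omega
      simpa [h1, e1, e2] using h.2 i h1
    · have : i = N := by omega
      subst this
      simp only [le_refl, if_pos, if_neg (by omega : ¬ i + 1 ≤ i), if_neg h1]
      exact he

lemma connTo_append {g c N m bo} (h : NPath p v1 v2 g c N) (hm : ∀ i, i ≤ N → g i ≠ m)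
    (he : cedge p v1 v2 bo (g N) m) : ConnTo p v1 v2 bo (g 0) m := by
  have h2 := h.append hm he
  have := ConnTo_of_NPath h2 (by omega) (k := m) (by simp) (bo := bo) (by simp)
  simpa using this

lemma NPath.nil (a : ℤ) (c : ℕ → Bool) : NPath p v1 v2 (fun _ => a) c 0 :=
  ⟨fun i hi j hj _ => by simp only [Set.mem_Iic, Nat.le_zero] at hi hj; omega,
   fun i hi => by omega⟩

lemma conn_single {a m : ℤ} {bo : Bool} (he : cedge p v1 v2 bo a m) :
    ConnTo p v1 v2 bo a m :=
  connTo_append (NPath.nil a (fun _ => bo)) (fun i hi => by simpa using he.1) he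

lemma NPath.suffix {g c N} (h : NPath p v1 v2 g c N) (j : ℕ) (hj : j ≤ N) :
    NPath p v1 v2 (fun s => g (j + s)) (fun s => c (j + s)) (N - j) := by
  constructor
  · intro s hs t ht hst
    simp only [Set.mem_Iic] at hs ht
    have := h.1 (Set.mem_Iic.mpr (by omega : j + s ≤ N)) (Set.mem_Iic.mpr (by omega)) hst
    omega
  · intro s hs
    have := h.2 (j + s) (by omega)
    simpa [Nat.add_assoc] using this

lemma NPath.reverse {g c N} (h : NPath p v1 v2 g c N) :
    NPath p v1 v2 (fun s => g (N - s)) (fun s => c (N - s - 1)) N := by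
  constructor
  · intro s hs t ht hst
    simp only [Set.mem_Iic] at hs ht
    have := h.1 (Set.mem_Iic.mpr (by omega : N - s ≤ N)) (Set.mem_Iic.mpr (by omega)) hst
    omega
  · intro s hs
    have := h.2 (N - s - 1) (by omega)
    have e : N - s - 1 + 1 = N - s := by omega
    rw [e] at this
    show cedge p v1 v2 (c (N - s - 1)) (g (N - s)) (g (N - (s+1)))
    have e2 : N - (s + 1) = N - s - 1 := by omega
    rw [e2]
    exact cedge_symm _ _ _ this

lemma NPath.concat {a ca q b cb r} (hA : NPath p v1 v2 a ca q) (hB : NPath p v1 v2 b cb r)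
    (hj : a q = b 0) (hd : ∀ s, s ≤ q → ∀ t, 0 < t → t ≤ r → a s ≠ b t) :
    NPath p v1 v2 (fun s => if s ≤ q then a s else b (s - q))
      (fun s => if s < q then ca s else cb (s - q)) (q + r) := by
  constructor
  · intro s hs t ht hst
    simp only [Set.mem_Iic] at hs ht
    by_cases h1 : s ≤ q <;> by_cases h2 : t ≤ q <;>
      simp only [h1, h2, if_pos, if_neg, if_true, if_false] at hst
    · exact hA.1 (Set.mem_Iic.mpr h1) (Set.mem_Iic.mpr h2) hst
    · exact absurd hst (hd s h1 (t - q) (by omega) (by omega))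
    · exact absurd hst.symm (hd t h2 (s - q) (by omega) (by omega))
    · have := hB.1 (Set.mem_Iic.mpr (by omega : s - q ≤ r)) (Set.mem_Iic.mpr (by omega)) hst
      omega
  · intro s hs
    by_cases h1 : s < q
    · have e1 : s ≤ q := by omega
      have e2 : s + 1 ≤ q := by omega
      simpa [h1, e1, e2] using hA.2 s h1
    · have e1 : ¬ (s + 1 ≤ q) := by omega
      have hBe := hB.2 (s - q) (by omega)
      have e3 : s + 1 - q = s - q + 1 := by omega
      by_cases h2 : s = q
      · subst h2
        simpa [e1, e3, hj] using hBe
      · have e4 : ¬ (s ≤ q) := by omega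
        simpa [h1, e1, e4, e3] using hBe

end Ops

section LemG
variable {p : ℤ → ℝ} {v1 v2 : ℝ}

lemma cedge_true_lam {a b : ℤ} (h : cedge p v1 v2 true a b) : lamk p v1 a = lamk p v1 b := by
  simpa using h.2

lemma cedge_false_lam {a b : ℤ} (h : cedge p v1 v2 false a b) : lamk p v2 a = lamk p v2 b := by
  simpa using h.2

/-- Lemma G: if there is a path from x to k whose last edge is red, then either x is itself
in the red clique of k (other than k), or x is connected to some clique member with last
edge blue. -/
lemma reach_clique {k : ℤ} :
    ∀ N, ∀ g : ℕ → ℤ, ∀ c : ℕ → Bool, NPath p v1 v2 g c N → 1 ≤ N → g N = k →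
    c (N - 1) = true →
    ∃ m, lamk p v1 m = lamk p v1 k ∧ m ≠ k ∧
      (g 0 = m ∨ (g 0 ≠ m ∧ ConnTo p v1 v2 false (g 0) m)) := by
  intro N
  induction N using Nat.strong_induction_on with
  | _ N ih =>
    intro g c hp hN hgN hc
    have hlast := hp.2 (N - 1) (by omega)
    rw [hc, (by omega : N - 1 + 1 = N), hgN] at hlast
    -- hlast : cedge true (g (N-1)) k
    by_cases hN1 : N = 1
    · subst hN1
      exact ⟨g 0, cedge_true_lam hlast, hlast.1, Or.inl rfl⟩
    · have hN2 : 2 ≤ N := by omega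
      by_cases hcc : c (N - 2) = false
      · -- prefix ends blue: x is connected to m̂ = g (N-1) in blue
        refine ⟨g (N - 1), cedge_true_lam hlast, hlast.1, Or.inr ⟨?_, ?_⟩⟩
        · intro h0
          have := hp.1 (Set.mem_Iic.mpr (by omega : (0:ℕ) ≤ N))
            (Set.mem_Iic.mpr (by omega : N - 1 ≤ N)) h0
          omega
        · exact ConnTo_of_NPath (hp.prefix (by omega : N - 1 ≤ N)) (by omega) rfl
            (by rw [(by omega : N - 1 - 1 = N - 2)]; exact hcc)
      · -- previous edge also red: splice out g (N-1)
        have hcc' : c (N - 2) = true := by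
          revert hcc; cases c (N - 2) <;> simp
        have hprev := hp.2 (N - 2) (by omega)
        rw [hcc', (by omega : N - 2 + 1 = N - 1)] at hprev
        -- build shorter path
        set g' : ℕ → ℤ := fun i => if i ≤ N - 2 then g i else k with hg'
        set c' : ℕ → Bool := fun i => if i < N - 2 then c i else true with hc'
        have hne : g (N - 2) ≠ k := by
          intro h
          have := hp.1 (Set.mem_Iic.mpr (by omega : N - 2 ≤ N))
            (Set.mem_Iic.mpr (le_refl N)) (by rw [h, hgN])
          omega
        have hlam2 : lamk p v1 (g (N - 2)) = lamk p v1 k :=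
          (cedge_true_lam hprev).trans (cedge_true_lam hlast)
        have hp' : NPath p v1 v2 g' c' (N - 1) := by
          constructor
          · intro i hi j hj hij
            simp only [Set.mem_Iic] at hi hj
            simp only [hg'] at hij
            by_cases h1 : i ≤ N - 2 <;> by_cases h2 : j ≤ N - 2 <;>
              simp only [h1, h2, if_pos, if_neg, if_true, if_false] at hij
            · exact hp.1 (Set.mem_Iic.mpr (by omega)) (Set.mem_Iic.mpr (by omega)) hij
            · exact absurd (hp.1 (Set.mem_Iic.mpr (by omega : i ≤ N))
                (Set.mem_Iic.mpr (le_refl N)) (by rw [hij, hgN])) (by omega)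
            · exact absurd (hp.1 (Set.mem_Iic.mpr (by omega : j ≤ N))
                (Set.mem_Iic.mpr (le_refl N)) (by rw [hij.symm, hgN])) (by omega)
            · omega
          · intro i hi
            by_cases h1 : i < N - 2
            · have e1 : i ≤ N - 2 := by omega
              have e2 : i + 1 ≤ N - 2 := by omega
              simpa [hg', hc', h1, e1, e2] using hp.2 i (by omega)
            · have e0 : i = N - 2 := by omega
              have e1 : ¬ (i + 1 ≤ N - 2) := by omega
              have e2 : i ≤ N - 2 := by omega
              simp only [hg', hc', if_neg h1, if_pos e2, if_neg e1]
              rw [e0]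
              exact ⟨hne, by simpa using hlam2⟩
        have := ih (N - 1) (by omega) g' c' hp' (by omega)
          (by simp only [hg', if_neg (by omega : ¬ N - 1 ≤ N - 2)])
          (by simp only [hc', if_neg (by omega : ¬ N - 1 - 1 < N - 2)])
        simpa only [hg', if_pos (by omega : (0:ℕ) ≤ N - 2)] using this

end LemG

section LemL
variable {p : ℤ → ℝ} {v1 v2 : ℝ}

/-- Lemma L: if some vertex of a cycle is joined to x by a path whose last edge has
color bo, then every vertex of the cycle is connected to x in color bo. -/
lemma cycle_spread {n : ℕ} {f : ZMod (n+3) → ℤ} {col : ZMod (n+3) → Bool}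
    (hinj : Function.Injective f)
    (hedge : ∀ i, cedge p v1 v2 (col i) (f i) (f (i+1)))
    {x : ℤ} {bo : Bool} {i0 : ZMod (n+3)} {N : ℕ} {g : ℕ → ℤ} {c : ℕ → Bool}
    (hp : NPath p v1 v2 g c N) (hN : 1 ≤ N) (h0 : g 0 = f i0) (hNx : g N = x)
    (hl : c (N-1) = bo) : ∀ i, ConnTo p v1 v2 bo (f i) x := by
  classical
  haveI : NeZero (n+3) := ⟨by omega⟩
  have hcastM : ∀ a : ℕ, ((a + (n+3) : ℕ) : ZMod (n+3)) = (a : ZMod (n+3)) := by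
    intro a; rw [Nat.cast_add, ZMod.natCast_self, add_zero]
  -- cyclic ℕ-indexed view
  set G : ℕ → ℤ := fun s => f ((s : ℕ) : ZMod (n+3)) with hG
  set C : ℕ → Bool := fun s => col ((s : ℕ) : ZMod (n+3)) with hC
  have hGe : ∀ s, cedge p v1 v2 (C s) (G s) (G (s+1)) := by
    intro s
    have e : (((s+1 : ℕ)) : ZMod (n+3)) = ((s : ℕ) : ZMod (n+3)) + 1 := by push_cast; ring
    simpa [hG, hC, e] using hedge ((s : ℕ) : ZMod (n+3))
  have hwin : ∀ s t, s < t → t < s + (n+3) → G s = G t → False := by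
    intro s t h1 h2 hst
    have := hinj hst
    rw [ZMod.natCast_eq_natCast_iff] at this
    have hdvd := (Nat.modEq_iff_dvd' (by omega : s ≤ t)).mp this
    have := Nat.le_of_dvd (by omega) hdvd
    omega
  have harc : ∀ a L, L ≤ (n+3) - 1 →
      NPath p v1 v2 (fun u => G (a + u)) (fun u => C (a + u)) L := by
    intro a L hL
    constructor
    · intro u hu u' hu' huu
      simp only [Set.mem_Iic] at hu hu'
      rcases Nat.lt_trichotomy u u' with h | h | h
      · exact absurd huu (fun hh => hwin (a+u) (a+u') (by omega) (by omega) hh)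
      · exact h
      · exact absurd huu.symm (fun hh => hwin (a+u') (a+u) (by omega) (by omega) hh)
    · intro u hu
      show cedge p v1 v2 (C (a + u)) (G (a + u)) (G (a + (u+1)))
      have e : a + (u + 1) = (a + u) + 1 := by omega
      rw [e]
      exact hGe (a + u)
  intro i
  by_cases hix : f i = x
  · exact Or.inl hix
  -- the last index on the path lying on the cycle
  set Q : ℕ → Prop := fun j => ∃ w : ZMod (n+3), f w = g j with hQ
  have hQ0 : Q 0 := ⟨i0, h0.symm⟩
  set j' := Nat.findGreatest Q (N - 1) with hj'
  have hQj' : Q j' := Nat.findGreatest_spec (by omega : 0 ≤ N - 1) hQ0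
  have hj'le : j' ≤ N - 1 := Nat.findGreatest_le _
  have hmax : ∀ jj, j' < jj → jj ≤ N - 1 → ¬ Q jj := fun jj h1 h2 =>
    Nat.findGreatest_is_greatest h1 h2
  obtain ⟨iy, hiy⟩ := hQj'
  -- suffix path B from y* = g j' to x
  set r := N - j' with hr
  have hrpos : 1 ≤ r := by omega
  set bG : ℕ → ℤ := fun s => g (j' + s) with hbG
  set bC : ℕ → Bool := fun s => c (j' + s) with hbC
  have hB : NPath p v1 v2 bG bC r := hp.suffix j' (by omega)
  have hBr : bG r = x := by
    simp only [hbG]; rw [(by omega : j' + r = N)]; exact hNx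
  have hBbo : bC (r - 1) = bo := by
    simp only [hbC]; rw [(by omega : j' + (r - 1) = N - 1)]; exact hl
  have hB0 : bG 0 = f iy := by simp only [hbG, Nat.add_zero]; exact hiy.symm
  have hyx : f iy ≠ x := by
    rw [← hB0]
    intro hh
    have := hp.1 (Set.mem_Iic.mpr (by omega : j' + 0 ≤ N)) (Set.mem_Iic.mpr (le_refl N))
      (by simpa [hbG] using hh.trans hNx.symm)
    omega
  have hint : ∀ s, 0 < s → s < r → ∀ w : ZMod (n+3), f w ≠ bG s := by
    intro s hs1 hs2 w hw
    exact hmax (j' + s) (by omega) (by omega) ⟨w, hw⟩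
  by_cases hiiy : i = iy
  · -- just use the suffix path
    subst hiiy
    have := ConnTo_of_NPath hB hrpos hBr hBbo
    rw [hB0] at this
    exact this
  · -- need an arc of the cycle from f i to f iy avoiding x
    have hvne : (i.val : ℕ) ≠ iy.val := fun hh => hiiy (ZMod.val_injective _ hh)
    set vi := i.val with hvi
    set vy := iy.val with hvy
    have hviM : vi < n+3 := ZMod.val_lt i
    have hvyM : vy < n+3 := ZMod.val_lt iy
    set b' := if vi < vy then vy else vy + (n+3) with hb'
    have hb1 : vi < b' := by simp only [hb']; split <;> omega
    have hb2 : b' - vi ≤ (n+3) - 1 := by simp only [hb']; split <;> omega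
    have hb3 : (((b' : ℕ)) : ZMod (n+3)) = iy := by
      simp only [hb']
      split
      · exact ZMod.natCast_rightInverse iy
      · rw [hcastM]
        exact ZMod.natCast_rightInverse iy
    have hGvi : G vi = f i := by
      simp only [hG]; rw [show ((vi : ℕ) : ZMod (n+3)) = i from ZMod.natCast_rightInverse i]
    have hGb' : G b' = f iy := by simp only [hG]; rw [hb3]
    set d := b' - vi with hd
    have hd1 : 1 ≤ d := by omega
    set e := vi + (n+3) - b' with he
    have he1 : 1 ≤ e := by simp only [he, hb']; split <;> omega
    have he2 : e ≤ (n+3) - 1 := by simp only [he, hb']; split <;> omega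
    have hGbe : G (b' + e) = f i := by
      rw [(by omega : b' + e = vi + (n+3))]
      show f (((vi + (n+3) : ℕ)) : ZMod (n+3)) = f i
      rw [hcastM]
      exact hGvi
    -- choose an arc avoiding x
    have hchoice : ∃ L aA cA, 1 ≤ L ∧ NPath p v1 v2 aA cA L ∧ aA 0 = f i ∧ aA L = f iy ∧
        (∀ u, u ≤ L → aA u ≠ x) ∧ (∀ u, u ≤ L → ∃ w : ZMod (n+3), f w = aA u) := by
      by_cases hobs : ∃ u, 0 < u ∧ u < d ∧ G (vi + u) = x
      · -- use the reverse of the arc from b' to b' + e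
        obtain ⟨u0, hu01, hu02, hu0x⟩ := hobs
        have hrev := (harc b' e he2).reverse
        refine ⟨e, _, _, he1, hrev, ?_, ?_, ?_, ?_⟩
        · show G (b' + (e - 0)) = f i
          rw [Nat.sub_zero, hGbe]
        · show G (b' + (e - e)) = f iy
          rw [Nat.sub_self, Nat.add_zero, hGb']
        · intro u hu
          show G (b' + (e - u)) ≠ x
          intro hh
          rcases Nat.eq_zero_or_pos (e - u) with h1 | h1
          · rw [h1, Nat.add_zero, hGb'] at hh; exact hyx hh
          · rcases Nat.lt_or_ge (e - u) e with h2 | h2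
            · exact hwin (vi + u0) (b' + (e - u)) (by omega) (by omega)
                (hu0x.trans hh.symm)
            · rw [(by omega : e - u = e), hGbe] at hh; exact hix hh
        · intro u hu
          exact ⟨((b' + (e - u) : ℕ) : ZMod (n+3)), rfl⟩
      · -- forward arc from vi to b'
        push_neg at hobs
        have hfwd := harc vi d hb2
        refine ⟨d, _, _, hd1, hfwd, ?_, ?_, ?_, ?_⟩
        · show G (vi + 0) = f i
          rw [Nat.add_zero, hGvi]
        · show G (vi + d) = f iy
          rw [(by omega : vi + d = b'), hGb']
        · intro u hu
          show G (vi + u) ≠ x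
          intro hh
          rcases Nat.eq_zero_or_pos u with h1 | h1
          · rw [h1, Nat.add_zero, hGvi] at hh; exact hix hh
          · rcases Nat.lt_or_ge u d with h2 | h2
            · exact absurd hh (hobs u h1 h2)
            · rw [(by omega : u = d), (by omega : vi + d = b'), hGb'] at hh; exact hyx hh
        · intro u hu
          exact ⟨((vi + u : ℕ) : ZMod (n+3)), rfl⟩
    obtain ⟨L, aA, cA, hL1, hA, hA0, hAL, hAx, hAr⟩ := hchoice
    -- concatenate the arc with the suffix path B
    have hjoin : aA L = bG 0 := by rw [hAL, hB0]
    have hdis : ∀ s, s ≤ L → ∀ t, 0 < t → t ≤ r → aA s ≠ bG t := by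
      intro s hs t ht1 ht2
      rcases Nat.lt_or_ge t r with h1 | h1
      · obtain ⟨w, hw⟩ := hAr s hs
        rw [← hw]
        exact hint t ht1 h1 w
      · rw [(by omega : t = r), hBr]
        exact hAx s hs
    have hcat := hA.concat hB hjoin hdis
    have := ConnTo_of_NPath hcat (by omega) (k := x) ?_ (bo := bo) ?_
    · simpa [if_pos (by omega : (0:ℕ) ≤ L), hA0] using this
    · simp only [if_neg (by omega : ¬ (L + r ≤ L))]
      rw [(by omega : L + r - L = r)]
      exact hBr
    · simp only [if_neg (by omega : ¬ (L + r - 1 < L))]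
      rw [(by omega : L + r - 1 - L = r - 1)]
      exact hBbo

end LemL

section Main
variable {p : ℤ → ℝ} {v1 v2 : ℝ}

/-- Constructing a two-colored cycle inside the red portion of m from a blue-ending path
to k passing through m, closed up with the red edge k–m. -/
lemma cycle_through {g c N k m j} (hp : NPath p v1 v2 g c N) (hgN : g N = k)
    (hcl : c (N-1) = false) (hj2 : j + 2 ≤ N) (hgj : g j = m)
    (he : cedge p v1 v2 true k m) :
    TwoColCycleIn p v1 v2 (Portion p v1 v2 true m) := by
  classical
  obtain ⟨n, hn⟩ : ∃ n, N = j + n + 2 := ⟨N - j - 2, by omega⟩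
  haveI : NeZero (n+3) := ⟨by omega⟩
  refine ⟨n, fun i => g (j + i.val), fun i => if i.val < n + 2 then c (j + i.val) else true,
    ?_, ?_, ?_, ?_⟩
  · -- injectivity
    intro i i' hii
    have h1 : j + i.val ≤ N := by have := ZMod.val_lt i; omega
    have h2 : j + i'.val ≤ N := by have := ZMod.val_lt i'; omega
    have := hp.1 (Set.mem_Iic.mpr h1) (Set.mem_Iic.mpr h2) hii
    exact ZMod.val_injective _ (by omega)
  · -- membership in Portion true m
    intro i
    rcases Nat.eq_zero_or_pos i.val with hs | hs
    · show ConnTo p v1 v2 true (g (j + i.val)) m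
      rw [hs, Nat.add_zero, hgj]
      exact Or.inl rfl
    · have hsle : j + i.val ≤ N := by have := ZMod.val_lt i; omega
      have hsuf := hp.suffix (j + i.val) hsle
      have hm : ∀ u, u ≤ N - (j + i.val) → (fun u => g (j + i.val + u)) u ≠ m := by
        intro u hu hh
        rw [← hgj] at hh
        have := hp.1 (Set.mem_Iic.mpr (by omega : j + i.val + u ≤ N))
          (Set.mem_Iic.mpr (by omega : j ≤ N)) hh
        omega
      have he' : cedge p v1 v2 true ((fun u => g (j + i.val + u)) (N - (j + i.val))) m := by
        show cedge p v1 v2 true (g (j + i.val + (N - (j + i.val)))) m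
        rw [(by omega : j + i.val + (N - (j + i.val)) = N), hgN]
        exact he
      have := connTo_append hsuf hm he'
      simpa [Portion] using this
  · -- edges
    intro i
    show cedge p v1 v2 (if i.val < n + 2 then c (j + i.val) else true)
      (g (j + i.val)) (g (j + (i + 1).val))
    have hvi := ZMod.val_lt i
    have hieq : i = ((i.val : ℕ) : ZMod (n+3)) := (ZMod.natCast_rightInverse i).symm
    by_cases hcase : i.val < n + 2
    · have hval1 : (i + 1).val = i.val + 1 := by
        have h2 : i + 1 = ((i.val + 1 : ℕ) : ZMod (n+3)) := by
          conv_lhs => rw [hieq]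
          push_cast; ring
        rw [h2]
        exact ZMod.val_cast_of_lt (by omega : i.val + 1 < n + 3)
      simp only [if_pos hcase, hval1]
      have hlt : j + i.val < N := by omega
      have := hp.2 (j + i.val) hlt
      rw [(by omega : j + i.val + 1 = j + (i.val + 1))] at this
      exact this
    · have hcase2 : i.val = n + 2 := by omega
      have hval1 : (i + 1).val = 0 := by
        have h2 : i + 1 = ((n + 3 : ℕ) : ZMod (n+3)) := by
          conv_lhs => rw [hieq, hcase2]
          push_cast; ring
        rw [h2, ZMod.natCast_self]
        exact ZMod.val_zero
      have e1 : (if i.val < n + 2 then c (j + i.val) else true) = true := if_neg hcase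
      rw [e1, hval1, hcase2]
      rw [(by omega : j + 0 = j), hgj, (by omega : j + (n + 2) = N), hgN]
      exact he
  · -- two-colored
    refine ⟨((n + 2 : ℕ) : ZMod (n+3)), ((n + 1 : ℕ) : ZMod (n+3)), ?_⟩
    have hv1 : (((n + 2 : ℕ) : ZMod (n+3))).val = n + 2 := ZMod.val_cast_of_lt (by omega)
    have hv2 : (((n + 1 : ℕ) : ZMod (n+3))).val = n + 1 := ZMod.val_cast_of_lt (by omega)
    show (if (((n + 2 : ℕ) : ZMod (n+3))).val < n + 2 then
        c (j + (((n + 2 : ℕ) : ZMod (n+3))).val) else true) ≠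
      (if (((n + 1 : ℕ) : ZMod (n+3))).val < n + 2 then
        c (j + (((n + 1 : ℕ) : ZMod (n+3))).val) else true)
    rw [hv1, hv2, if_neg (by omega : ¬ (n + 2 < n + 2)), if_pos (by omega : n + 1 < n + 2)]
    rw [(by omega : j + (n + 1) = N - 1), hcl]
    simp

/-- Step 3: every red neighbour of a vertex whose blue portion is bad has bad red portion. -/
lemma nbr_bad (hv : v1 ≠ v2) {k m : ℤ} (he : cedge p v1 v2 true k m)
    (hbad : ¬ PortionGood p v1 v2 false k) : ¬ PortionGood p v1 v2 true m := by
  rintro ⟨hfin, hnc⟩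
  apply hbad
  have hsub : Portion p v1 v2 false k ⊆ Portion p v1 v2 true m := by
    intro x hx
    rcases NPath_of_ConnTo hx with rfl | ⟨N, g, c, hN, hp, h0, hNk, hcl⟩
    · exact conn_single he
    · by_cases hmem2 : ∃ j, j ≤ N ∧ g j = m
      · exfalso
        obtain ⟨j, hjN, hgj⟩ := hmem2
        have hjne : j ≠ N := by
          intro h; rw [h, hNk] at hgj; exact he.1 hgj
        have hjne2 : j ≠ N - 1 := by
          intro h
          have hedge := hp.2 (N-1) (by omega)
          rw [hcl, (by omega : N - 1 + 1 = N), hNk] at hedge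
          rw [h] at hgj
          rw [hgj] at hedge
          exact he.1 (eq_of_lam_eq p v1 v2 hv (cedge_true_lam he)
            (cedge_false_lam hedge).symm)
        exact hnc (cycle_through hp hNk hcl (by omega) hgj he)
      · push_neg at hmem2
        rw [← h0]
        exact connTo_append hp hmem2 (by rw [hNk]; exact he)
  refine ⟨hfin.subset hsub, ?_⟩
  rintro ⟨nn, f, col, hfi, hfm, hfe, i1, j1, hij⟩
  exact hnc ⟨nn, f, col, hfi, fun i => hsub (hfm i), hfe, i1, j1, hij⟩

/-- Step 2: if the red portion of k is bad, some red neighbour of k has bad blue portion. -/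
lemma exists_nbr_badblue {k : ℤ} (hv : v1 ≠ v2) (hXi : (XiSet p v1 k).Finite)
    (hbad : ¬ PortionGood p v1 v2 true k) :
    ∃ m, lamk p v1 m = lamk p v1 k ∧ m ≠ k ∧ ¬ PortionGood p v1 v2 false m := by
  by_contra hcon
  push_neg at hcon
  apply hbad
  constructor
  · -- finiteness
    have hsub : Portion p v1 v2 true k ⊆
        (XiSet p v1 k) ∪ ⋃ m ∈ (XiSet p v1 k \ {k} : Set ℤ), Portion p v1 v2 false m := by
      intro x hx
      rcases NPath_of_ConnTo hx with rfl | ⟨N, g, c, hN, hp, h0, hNk, hcl⟩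
      · exact Or.inl rfl
      · obtain ⟨m, hlam, hmk, hcase⟩ := reach_clique N g c hp hN hNk hcl
        rcases hcase with h1 | ⟨hne, hconn⟩
        · exact Or.inl (show lamk p v1 x = lamk p v1 k by rw [← h0, h1]; exact hlam)
        · exact Or.inr (Set.mem_biUnion (⟨hlam, hmk⟩ : m ∈ XiSet p v1 k \ {k})
            (h0 ▸ hconn))
    refine Set.Finite.subset (Set.Finite.union hXi ?_) hsub
    refine Set.Finite.biUnion hXi.diff ?_
    intro m hm
    exact (hcon m hm.1 hm.2).1
  · -- no two-colored cycle
    rintro ⟨nn, f, col, hfinj, hfmem, hfedge, i1, j1, hij⟩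
    by_cases hall : ∀ i, lamk p v1 (f i) = lamk p v1 k
    · have hcolall : ∀ i, col i = true := by
        intro i
        cases hcv : col i
        · exfalso
          have hedge := hfedge i
          rw [hcv] at hedge
          exact hedge.1 (eq_of_lam_eq p v1 v2 hv ((hall i).trans (hall (i+1)).symm)
            (cedge_false_lam hedge))
        · rfl
      exact hij ((hcolall i1).trans (hcolall j1).symm)
    · push_neg at hall
      obtain ⟨iz, hiz⟩ := hall
      have hzk : f iz ≠ k := fun h => hiz (by rw [h])
      have hzconn := hfmem iz
      rcases NPath_of_ConnTo hzconn with h | ⟨N, g, c, hN, hp, h0, hNk, hcl⟩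
      · exact hzk h
      · obtain ⟨m, hlam, hmk, hcase⟩ := reach_clique N g c hp hN hNk hcl
        have hzm : g 0 ≠ m := by
          rw [h0]
          intro h
          exact hiz (h ▸ hlam)
        rcases hcase with h1 | ⟨_, hconn⟩
        · exact hzm h1
        · rcases NPath_of_ConnTo hconn with h | ⟨N', g', c', hN', hp', h0', hN'm, hcl'⟩
          · exact hzm h
          · have hallconn := cycle_spread hfinj hfedge hp' hN'
              (i0 := iz) (h0'.trans h0) hN'm hcl'
            exact (hcon m hlam hmk).2
              ⟨nn, f, col, hfinj, fun i => hallconn i, hfedge, i1, j1, hij⟩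

/-- Main red-edge lemma. -/
lemma main_red {k : ℤ} (hv : v1 ≠ v2) (hXi : (XiSet p v1 k).Finite)
    (hbr : ¬ PortionGood p v1 v2 true k) (hbb : ¬ PortionGood p v1 v2 false k) :
    ∃ m, cedge p v1 v2 true k m ∧ ¬ PortionGood p v1 v2 true m ∧
      ¬ PortionGood p v1 v2 false m := by
  obtain ⟨m, hlam, hmk, hmbb⟩ := exists_nbr_badblue hv hXi hbr
  have he : cedge p v1 v2 true k m := ⟨fun h => hmk h.symm, by simpa using hlam.symm⟩
  exact ⟨m, he, nbr_bad hv he hbb, hmbb⟩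

end Main

section Swap
variable (p : ℤ → ℝ) (v1 v2 : ℝ)

lemma connTo_swap_mp {bo : Bool} {k' k : ℤ} (h : ConnTo p v1 v2 bo k' k) :
    ConnTo p v2 v1 (!bo) k' k := by
  rcases h with h | ⟨n, f, col, hi, hed, h0, hl, hcl⟩
  · exact Or.inl h
  · exact Or.inr ⟨n, f, fun i => !(col i), hi,
      fun i => (cedge_swap p v1 v2).mpr (hed i), h0, hl, congrArg Bool.not hcl⟩

lemma Portion_swap (bo : Bool) (k : ℤ) :
    Portion p v2 v1 (!bo) k = Portion p v1 v2 bo k := by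
  ext x
  constructor
  · intro h
    have := connTo_swap_mp p v2 v1 h
    simpa [Portion] using this
  · exact fun h => connTo_swap_mp p v1 v2 h

lemma twoCol_swap_mp {S : Set ℤ} (h : TwoColCycleIn p v1 v2 S) : TwoColCycleIn p v2 v1 S := by
  obtain ⟨n, f, col, hi, hmem, hed, i1, j1, hij⟩ := h
  refine ⟨n, f, fun i => !(col i), hi, hmem, fun i => (cedge_swap p v1 v2).mpr (hed i),
    i1, j1, ?_⟩
  intro hh
  exact hij (by simpa using hh)

lemma good_swap (bo : Bool) (k : ℤ) :
    PortionGood p v2 v1 (!bo) k ↔ PortionGood p v1 v2 bo k := by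
  unfold PortionGood
  rw [Portion_swap p v1 v2 bo k]
  constructor
  · rintro ⟨h1, h2⟩
    exact ⟨h1, fun hc => h2 (twoCol_swap_mp p v1 v2 hc)⟩
  · rintro ⟨h1, h2⟩
    exact ⟨h1, fun hc => h2 (twoCol_swap_mp p v2 v1 hc)⟩

end Swap

/-- Every vertex of the reduced graph G̃(v₁,v₂) is incident with both a red edge and a
blue edge of G̃(v₁,v₂). -/
theorem stmt_9 (p : ℤ → ℝ) (hH1 : hypH1 p) (hH2 : hypH2 p) (v1 v2 : ℝ) (hv : v1 ≠ v2) :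
    ∀ k ∈ ReducedV p v1 v2,
      (∃ m ∈ ReducedV p v1 v2, cedge p v1 v2 true k m) ∧
      (∃ m ∈ ReducedV p v1 v2, cedge p v1 v2 false k m) := by
  intro k hk
  obtain ⟨hkP, hkgood⟩ := hk
  rw [Set.mem_setOf_eq] at hkgood
  push_neg at hkgood
  obtain ⟨hbr, hbb⟩ := hkgood
  constructor
  · -- red edge
    obtain ⟨m, he, hmt, hmf⟩ := main_red hv (hH1 v1 k) hbr hbb
    have hlam : lamk p v1 k = lamk p v1 m := by simpa using he.2
    refine ⟨m, ⟨Or.inl ⟨k, he.1, hlam.symm⟩, ?_⟩, he⟩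
    rw [Set.mem_setOf_eq]
    rintro (h | h)
    · exact hmt h
    · exact hmf h
  · -- blue edge
    have hbr' : ¬ PortionGood p v2 v1 true k := fun h =>
      hbb ((good_swap p v1 v2 false k).mp h)
    have hbb' : ¬ PortionGood p v2 v1 false k := fun h =>
      hbr ((good_swap p v1 v2 true k).mp h)
    obtain ⟨m, he, hmt, hmf⟩ := main_red hv.symm (hH1 v2 k) hbr' hbb'
    have he2 : cedge p v1 v2 false k m := (cedge_swap p v1 v2).mp he
    have hlam : lamk p v2 k = lamk p v2 m := by simpa using he2.2
    refine ⟨m, ⟨Or.inr ⟨k, he2.1, hlam.symm⟩, ?_⟩, he2⟩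
    rw [Set.mem_setOf_eq]
    rintro (h | h)
    · exact hmf ((good_swap p v1 v2 true m).mpr h)
    · exact hmt ((good_swap p v1 v2 false m).mpr h)
end

section
/- Let p(x) = a_{2n+1}x^{2n+1} + ⋯ + a_1 x + a_0 be a real polynomial of odd degree 2n+1 with a_{2n+1} ≠ 0 and n ≥ 1. Then for every v ∈ ℝ the set Π(v) = {k ∈ ℤ : ∃ m ∈ ℤ, m ≠ k, p(k) − kv = p(m) − mv} is finite. -/
/-!
Put `g = P - v X`; since `2n + 1 > 1` it still has odd degree, and `k ∈ Π(v)` says exactly that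
`g k = g m` for an integer `m ≠ k`. Replacing `g` by `-g` if necessary, its leading coefficient is
positive. By Rolle's theorem `g` is injective on every half-line free of roots of `g'`, hence on
`[R, ∞)` for large `R`. As `g → -∞` at `-∞` (odd degree), `g` is bounded above on `(-∞, R]`, and
as `g → ∞` at `∞`, beyond some point `g` exceeds that bound. So a point where `g` is not injective
is bounded above, and (reversing the order) bounded below; only finitely many integers remain.
-/

open MeasureTheory Real Complex
open scoped ENNReal

open Filter Set Polynomial

def collisions {α β : Type*} (f : α → β) : Set α := {x | ∃ y, y ≠ x ∧ f x = f y}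

section Order

variable {α β : Type*} [ConditionallyCompleteLinearOrder α] [TopologicalSpace α] [OrderTopology α]
  [LinearOrder β] [TopologicalSpace β] [OrderClosedTopology β] {f : α → β}

theorem bddAbove_image_Iic_of_tendsto_atBot (hf : Continuous f) (hbot : Tendsto f atBot atBot)
    (c : α) : BddAbove (f '' Iic c) := by
  have : Nonempty α := ⟨c⟩
  have : Nonempty β := ⟨f c⟩
  obtain ⟨R, hR⟩ := eventually_atBot.1 (hbot.eventually_le_atBot (f c))
  refine (((isCompact_Icc (a := min R c) (b := c)).bddAbove_image hf.continuousOn).union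
    (bddAbove_Iic (a := f c))).mono ?_
  rintro _ ⟨x, hx, rfl⟩
  rcases le_or_gt x R with hxR | hRx
  · exact Or.inr (hR x hxR)
  · exact Or.inl ⟨x, ⟨min_le_of_left_le hRx.le, hx⟩, rfl⟩

theorem bddAbove_collisions [NoMaxOrder β] (hf : Continuous f) {R : α} (hinj : InjOn f (Ici R))
    (htop : Tendsto f atTop atTop) (hbot : Tendsto f atBot atBot) : BddAbove (collisions f) := by
  have : Nonempty α := ⟨R⟩
  obtain ⟨M, hM⟩ := bddAbove_image_Iic_of_tendsto_atBot hf hbot R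
  obtain ⟨R', hR'⟩ := eventually_atTop.1 (htop.eventually_gt_atTop M)
  refine ⟨max R R', fun x ⟨y, hyx, hxy⟩ => le_of_not_gt fun hx => ?_⟩
  rcases le_or_gt R y with hRy | hyR
  · exact hyx (hinj (le_of_max_le_left hx.le) hRy hxy).symm
  · exact (hR' x (le_of_max_le_right hx.le)).not_ge (hxy ▸ hM ⟨y, hyR.le, rfl⟩)

theorem bddBelow_collisions [NoMinOrder β] (hf : Continuous f) {R : α} (hinj : InjOn f (Iic R))
    (htop : Tendsto f atTop atTop) (hbot : Tendsto f atBot atBot) : BddBelow (collisions f) :=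
  bddAbove_collisions (α := αᵒᵈ) (β := βᵒᵈ) hf hinj hbot htop

end Order

theorem Set.OrdConnected.injOn_of_deriv_ne_zero {f : ℝ → ℝ} {s : Set ℝ} (hs : s.OrdConnected)
    (hf : ContinuousOn f s) (hf' : ∀ x ∈ s, deriv f x ≠ 0) : InjOn f s := by
  intro x hx y hy hxy
  by_contra hne
  wlog hlt : x < y generalizing x y
  · exact this hy hx hxy.symm (Ne.symm hne) ((le_of_not_gt hlt).lt_of_ne' hne)
  obtain ⟨c, hc, hc0⟩ := exists_deriv_eq_zero hlt (hf.mono (hs.out hx hy)) hxy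
  exact hf' c (hs.out hx hy (Ioo_subset_Icc_self hc)) hc0

theorem finite_preimage_intCast_of_bddBelow_of_bddAbove {s : Set ℝ} (hlo : BddBelow s)
    (hhi : BddAbove s) : (Int.cast ⁻¹' s : Set ℤ).Finite := by
  obtain ⟨lo, hlo⟩ := hlo
  obtain ⟨hi, hhi⟩ := hhi
  exact (finite_Icc ⌈lo⌉ ⌊hi⌋).subset fun k hk => ⟨Int.ceil_le.2 (hlo hk), Int.le_floor.2 (hhi hk)⟩

namespace Polynomial

variable {g : ℝ[X]}

theorem exists_injOn_eval_Ici (hg : g.natDegree ≠ 0) : ∃ R, InjOn g.eval (Ici R) := by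
  obtain ⟨R, hR⟩ := eventually_atTop.1 (eventually_atTop_not_isRoot _ (derivative_ne_zero.2 hg))
  refine ⟨R, ordConnected_Ici.injOn_of_deriv_ne_zero g.continuousOn fun x hx => ?_⟩
  rw [Polynomial.deriv]
  exact hR x hx

theorem exists_injOn_eval_Iic (hg : g.natDegree ≠ 0) : ∃ R, InjOn g.eval (Iic R) := by
  obtain ⟨R, hR⟩ := eventually_atBot.1 (eventually_atBot_not_isRoot _ (derivative_ne_zero.2 hg))
  refine ⟨R, ordConnected_Iic.injOn_of_deriv_ne_zero g.continuousOn fun x hx => ?_⟩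
  rw [Polynomial.deriv]
  exact hR x hx

theorem tendsto_atBot_of_odd_natDegree (hodd : Odd g.natDegree) (hlc : 0 < g.leadingCoeff) :
    Tendsto g.eval atBot atBot := by
  have hpow : Tendsto (fun x : ℝ => x ^ g.natDegree) atBot atBot := by
    simpa [Function.comp_def, hodd.neg_pow] using (tendsto_neg_atTop_atBot (G := ℝ)).comp
      ((tendsto_pow_atTop hodd.pos.ne').comp tendsto_neg_atBot_atTop)
  exact g.isEquivalent_atBot_lead.symm.tendsto_atBot (hpow.const_mul_atBot hlc)

theorem bddBelow_and_bddAbove_collisions_eval (hodd : Odd g.natDegree) :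
    BddBelow (collisions g.eval) ∧ BddAbove (collisions g.eval) := by
  wlog hlc : 0 < g.leadingCoeff generalizing g
  · have hneg : collisions (-g).eval = collisions g.eval := by
      ext x
      simp [collisions]
    have hlc' : 0 < (-g).leadingCoeff := by
      rw [leadingCoeff_neg, neg_pos]
      exact (le_of_not_gt hlc).lt_of_ne (leadingCoeff_ne_zero.2 (ne_zero_of_natDegree_gt hodd.pos))
    exact hneg ▸ this (by rwa [natDegree_neg]) hlc'
  have htop := g.tendsto_atTop_of_leadingCoeff_nonneg (natDegree_pos_iff_degree_pos.1 hodd.pos)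
    hlc.le
  have hbot := tendsto_atBot_of_odd_natDegree hodd hlc
  obtain ⟨R, hR⟩ := exists_injOn_eval_Ici hodd.pos.ne'
  obtain ⟨R', hR'⟩ := exists_injOn_eval_Iic hodd.pos.ne'
  exact ⟨bddBelow_collisions g.continuous hR' htop hbot,
    bddAbove_collisions g.continuous hR htop hbot⟩

end Polynomial

/-- For a real polynomial of odd degree 2n+1 ≥ 3, the set Π(v) is finite for every v. -/
theorem stmt_11 (P : Polynomial ℝ) (n : ℕ) (hn : 1 ≤ n)
    (hdeg : P.natDegree = 2 * n + 1) :
    ∀ v : ℝ, (PiV (fun k => P.eval (k : ℝ)) v).Finite := by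
  intro v
  set g := P - C v * X
  have hg : g.natDegree = 2 * n + 1 := by
    rw [natDegree_sub_eq_left_of_natDegree_lt] <;>
      linarith [(natDegree_C_mul_le v X).trans natDegree_X_le]
  obtain ⟨hlo, hhi⟩ := bddBelow_and_bddAbove_collisions_eval (hg ▸ odd_two_mul_add_one n)
  refine (finite_preimage_intCast_of_bddBelow_of_bddAbove hlo hhi).subset ?_
  rintro k ⟨m, hmk, hkm⟩
  refine ⟨m, Int.cast_injective.ne hmk, ?_⟩
  simp only [lamk] at hkm
  simp only [g, eval_sub, eval_mul, eval_C, eval_X]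
  linarith
end

section
/- Let p be a real polynomial with degree deg p ≥ 2. Then for every v ∈ ℝ one has γ'(v) = ∞; that is, for every M > 0 there exists a finite set W ⊆ Λ(v) such that |λ − λ'| ≥ M for all distinct λ, λ' ∈ Λ(v)\W. -/
open MeasureTheory Real Complex
open scoped ENNReal

/-!
With `F x = P x - v x` we have `λ_k(v) = F k` and `deg F ≥ 2`, so it suffices that
`|F k - F m| ≥ M` whenever `F k ≠ F m` and `|k|, |m|` are large. For `k, m` of the same sign this
is the mean value theorem, since `|F'| → ∞`. For `k → ∞`, `m = -n → -∞`: if `deg F` is odd,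
`F k` and `F (-n)` tend to infinities of opposite signs. If `deg F` is even, `F x - F (-x)` has
degree `< deg F`, so it is dominated by `|F k - F n| ≥ |k - n| ε n ^ (deg F - 1)` once `|k - n|`
is large; for each of the finitely many remaining shifts `s = k - n`, the polynomial
`F x - F (s - x)` changes sign under `x ↦ s - x`, so it is either zero or nonconstant, and then
its absolute value tends to infinity.
-/

open Filter Polynomial Set

theorem mul_sub_le_abs_sub_of_le_abs_deriv {f : ℝ → ℝ} (hf : Differentiable ℝ f) {L x y : ℝ}
    (hyx : y < x) (h : ∀ ξ ∈ Ioo y x, L ≤ |deriv f ξ|) : L * (x - y) ≤ |f x - f y| := by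
  obtain ⟨ξ, hξ, hslope⟩ :=
    exists_deriv_eq_slope f hyx hf.continuous.continuousOn hf.differentiableOn
  rw [eq_div_iff (sub_ne_zero.2 hyx.ne')] at hslope
  rw [← hslope, abs_mul, abs_of_pos (sub_pos.2 hyx)]
  exact mul_le_mul_of_nonneg_right (h ξ hξ) (sub_pos.2 hyx).le

namespace Polynomial

theorem eventually_le_abs_eval_sub_of_ne (F : ℝ[X]) (hF : 2 ≤ F.natDegree) {M : ℝ} (hM : 0 ≤ M) :
    ∀ᶠ p : ℤ × ℤ in atTop ×ˢ atTop,
      p.1 ≠ p.2 → M ≤ |F.eval (p.1 : ℝ) - F.eval (p.2 : ℝ)| := by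
  have hdeg : 0 < F.derivative.degree := by
    rw [← natDegree_pos_iff_degree_pos, natDegree_derivative]; omega
  obtain ⟨R, hR⟩ := eventually_atTop.1 ((abs_tendsto_atTop _ hdeg).eventually_ge_atTop M)
  have hlarge : ∀ᶠ k : ℤ in atTop, R ≤ (k : ℝ) := tendsto_intCast_atTop_atTop.eventually_ge_atTop R
  filter_upwards [hlarge.prod_inl atTop, hlarge.prod_inr atTop] with ⟨k, m⟩ hk hm hne
  wlog hmk : m < k generalizing k m
  · rw [abs_sub_comm]
    exact this m k hm hk hne.symm (hne.lt_or_gt.resolve_right hmk)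
  have hgap : (m : ℝ) + 1 ≤ k := by exact_mod_cast hmk
  calc M ≤ M * ((k : ℝ) - m) := le_mul_of_one_le_right hM (by linarith)
    _ ≤ |F.eval (k : ℝ) - F.eval (m : ℝ)| :=
      mul_sub_le_abs_sub_of_le_abs_deriv F.differentiable (Int.cast_lt.2 hmk) fun ξ hξ => by
        rw [Polynomial.deriv]; exact hR ξ (hm.trans hξ.1.le)

theorem eventually_eval_eq_or_le_abs_eval_sub_eval_sub (F : ℝ[X]) (s M : ℝ) :
    ∀ᶠ x in atTop, F.eval x = F.eval (s - x) ∨ M ≤ |F.eval x - F.eval (s - x)| := by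
  set G := F - F.comp (C s - X)
  have hG : ∀ x, G.eval x = F.eval x - F.eval (s - x) := fun x => by simp [G]
  by_cases hdeg : 0 < G.degree
  · exact ((abs_tendsto_atTop G hdeg).eventually_ge_atTop M).mono fun x hx => Or.inr (hG x ▸ hx)
  -- `G (s - x) = -G x`, so a constant `G` vanishes.
  have hconst : ∀ x, G.eval x = G.coeff 0 := fun x => by
    rw [eq_C_of_degree_le_zero (not_lt.1 hdeg)]; simp
  refine Eventually.of_forall fun x => Or.inl ?_
  have hs := hG s
  have h0 := hG 0
  rw [sub_self] at hs
  rw [sub_zero] at h0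
  linarith [hG x, hconst x, hconst s, hconst 0]

theorem natDegree_comp_neg_X {R : Type*} [Ring R] (F : R[X]) :
    (F.comp (-X)).natDegree = F.natDegree :=
  natDegree_eq_natDegree degree_comp_neg_X

theorem degree_sub_comp_neg_X_le {R : Type*} [Ring R] (F : R[X]) (hF : Even F.natDegree) :
    (F - F.comp (-X)).degree ≤ (F.natDegree - 1 : ℕ) := by
  rcases eq_or_ne (F - F.comp (-X)) 0 with h0 | h0
  · rw [h0, degree_zero]; exact bot_le
  have hlt : (F - F.comp (-X)).degree < F.degree := by
    refine degree_sub_lt_left degree_comp_neg_X.symm (fun h => h0 (by simp [h])) ?_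
    rw [comp_neg_X_leadingCoeff_eq, hF.neg_one_pow, one_mul]
  exact degree_le_of_natDegree_le (Nat.le_sub_one_of_lt (natDegree_lt_natDegree h0 hlt))

theorem exists_eventually_le_abs_eval_sub_eval_neg (F : ℝ[X]) (hF : Even F.natDegree)
    (hF0 : 0 < F.natDegree) {M : ℝ} (hM : 0 ≤ M) :
    ∃ S, ∀ᶠ y in atTop, ∀ x, y + S ≤ x → M ≤ |F.eval x - F.eval (-y)| := by
  set e := F.natDegree - 1
  set H := F - F.comp (-X)
  have hXe : ∀ y : ℝ, (X ^ e : ℝ[X]).eval y = y ^ e := by simp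
  obtain ⟨C, hC, hCH⟩ :=
    (isBigO_atTop_of_degree_le H (X ^ e) (by simpa using degree_sub_comp_neg_X_le F hF)).exists_pos
  obtain ⟨c, hc, hcF'⟩ := (isBigO_atTop_of_degree_le (X ^ e) F.derivative (by
    rw [degree_X_pow, degree_derivative hF0.ne'])).exists_pos
  refine ⟨c * (C + M), ?_⟩
  filter_upwards [eventually_forall_ge_atTop.2 hcF'.bound, hCH.bound, eventually_ge_atTop 1]
    with y hF' hH hy x hx
  simp only [hXe, Real.norm_eq_abs, abs_pow, abs_of_pos (zero_lt_one.trans_le hy)] at hF' hH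
  have hS : 0 < c * (C + M) := by positivity
  have hyx : y < x := by linarith
  have hderiv : ∀ ξ ∈ Ioo y x, y ^ e / c ≤ |deriv (fun x => F.eval x) ξ| := fun ξ hξ => by
    have hξ0 : 0 ≤ ξ := by linarith [hξ.1]
    have := hF' ξ hξ.1.le
    rw [abs_of_nonneg hξ0] at this
    rw [Polynomial.deriv, div_le_iff₀' hc]
    exact (pow_le_pow_left₀ (by linarith) hξ.1.le e).trans this
  have hmvt := mul_sub_le_abs_sub_of_le_abs_deriv F.differentiable hyx hderiv
  have hHy : H.eval y = F.eval y - F.eval (-y) := by simp [H]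
  have hpow : 1 ≤ y ^ e := one_le_pow₀ hy
  have hfar : y ^ e * (C + M) ≤ y ^ e / c * (x - y) := by
    rw [div_mul_eq_mul_div, le_div_iff₀ hc]
    nlinarith [pow_pos (zero_lt_one.trans_le hy) e]
  calc M ≤ M * y ^ e := le_mul_of_one_le_right hM hpow
    _ = y ^ e * (C + M) - C * y ^ e := by ring
    _ ≤ |F.eval x - F.eval y| - |H.eval y| := by linarith
    _ ≤ |F.eval x - F.eval (-y)| := by
      rw [hHy]
      linarith [abs_sub_le (F.eval x) (F.eval (-y)) (F.eval y),
        abs_sub_comm (F.eval y) (F.eval (-y))]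

theorem tendsto_abs_eval_sub_eval_neg (F : ℝ[X]) (hF : Odd F.natDegree) :
    Tendsto (fun p : ℝ × ℝ => |F.eval p.1 - F.eval (-p.2)|) (atTop ×ˢ atTop) atTop := by
  have hF0 : F ≠ 0 := by rintro rfl; simp at hF
  wlog hlc : 0 < F.leadingCoeff generalizing F
  · have := this (-F) (by simpa using hF) (neg_ne_zero.2 hF0) (by
      rw [leadingCoeff_neg]; exact neg_pos.2 ((not_lt.1 hlc).lt_of_ne (leadingCoeff_ne_zero.2 hF0)))
    simpa only [eval_neg, neg_sub_neg, abs_sub_comm] using this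
  have hdeg : 0 < F.degree := natDegree_pos_iff_degree_pos.1 hF.pos
  have hpos := F.tendsto_atTop_of_leadingCoeff_nonneg hdeg hlc.le
  have hneg : Tendsto (fun y => -F.eval (-y)) atTop atTop := by
    have := (-F.comp (-X)).tendsto_atTop_of_leadingCoeff_nonneg (by simpa using hdeg)
      (by simp [hF.neg_one_pow, hlc.le])
    simpa using this
  have hsum := (hpos.comp tendsto_fst).atTop_add_atTop (hneg.comp tendsto_snd)
  simp only [Function.comp_def, ← sub_eq_add_neg] at hsum
  exact tendsto_abs_atTop_atTop.comp hsum

theorem eventually_eval_eq_or_le_abs_eval_sub_eval_neg (F : ℝ[X]) (hF : 2 ≤ F.natDegree) {M : ℝ}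
    (hM : 0 ≤ M) : ∀ᶠ p : ℤ × ℤ in atTop ×ˢ atTop,
      F.eval (p.1 : ℝ) = F.eval (-p.2 : ℝ) ∨ M ≤ |F.eval (p.1 : ℝ) - F.eval (-p.2 : ℝ)| := by
  have hcast := tendsto_intCast_atTop_atTop (R := ℝ)
  rcases Nat.even_or_odd F.natDegree with heven | hodd
  swap
  · exact (((tendsto_abs_eval_sub_eval_neg F hodd).comp (hcast.prodMap hcast)).eventually_ge_atTop
      M).mono fun _ => Or.inr
  obtain ⟨S₁, hfar₁⟩ := exists_eventually_le_abs_eval_sub_eval_neg F heven (by omega) hM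
  obtain ⟨S₂, hfar₂⟩ := exists_eventually_le_abs_eval_sub_eval_neg (F.comp (-X))
    (by rwa [natDegree_comp_neg_X]) (by rw [natDegree_comp_neg_X]; omega) hM
  set N := ⌈max S₁ S₂⌉
  have hnear : ∀ᶠ k : ℤ in atTop, ∀ t ∈ Finset.Icc (-N) N,
      F.eval (k : ℝ) = F.eval (t - k : ℝ) ∨ M ≤ |F.eval (k : ℝ) - F.eval (t - k : ℝ)| :=
    (Finset.eventually_all _).2 fun t _ =>
      hcast.eventually (eventually_eval_eq_or_le_abs_eval_sub_eval_sub F t M)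
  filter_upwards [hnear.prod_inl atTop, (hcast.eventually hfar₁).prod_inr atTop,
    (hcast.eventually hfar₂).prod_inl atTop] with ⟨k, n⟩ hnear hfar₁ hfar₂
  have hN : max S₁ S₂ ≤ N := Int.le_ceil _
  rcases le_or_gt (k - n) N with hkn | hkn
  · rcases le_or_gt (-N) (k - n) with hnk | hnk
    · simpa using hnear (k - n) (Finset.mem_Icc.2 ⟨hnk, hkn⟩)
    · have : (N : ℝ) < n - k := by exact_mod_cast (by omega : N < n - k)
      have := hfar₂ n (by linarith [le_max_right S₁ S₂])
      simp only [eval_comp, eval_neg, eval_X, neg_neg] at this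
      exact Or.inr (abs_sub_comm (F.eval (-n : ℝ)) _ ▸ this)
  · have : (N : ℝ) < k - n := by exact_mod_cast hkn
    exact Or.inr (hfar₁ k (by linarith [le_max_left S₁ S₂]))

theorem eventually_cofinite_eval_eq_or_le_abs_eval_sub (F : ℝ[X]) (hF : 2 ≤ F.natDegree) {M : ℝ}
    (hM : 0 ≤ M) : ∀ᶠ p : ℤ × ℤ in cofinite ×ˢ cofinite,
      F.eval (p.1 : ℝ) = F.eval (p.2 : ℝ) ∨ M ≤ |F.eval (p.1 : ℝ) - F.eval (p.2 : ℝ)| := by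
  have hneg := tendsto_neg_atBot_atTop (G := ℤ)
  have hsame (G : ℝ[X]) (hG : 2 ≤ G.natDegree) : ∀ᶠ p : ℤ × ℤ in atTop ×ˢ atTop,
      G.eval (p.1 : ℝ) = G.eval (p.2 : ℝ) ∨ M ≤ |G.eval (p.1 : ℝ) - G.eval (p.2 : ℝ)| :=
    (eventually_le_abs_eval_sub_of_ne G hG hM).mono fun p hp =>
      or_iff_not_imp_left.2 fun h => hp fun h' => h (h' ▸ rfl)
  have hmixed := eventually_eval_eq_or_le_abs_eval_sub_eval_neg F hF hM
  rw [Int.cofinite_eq, sup_prod, prod_sup, prod_sup, eventually_sup, eventually_sup,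
    eventually_sup]
  refine ⟨⟨?_, ?_⟩, ?_, ?_⟩
  · have hsame_neg := hsame (F.comp (-X)) (by rwa [natDegree_comp_neg_X])
    filter_upwards [(hneg.prodMap hneg).eventually hsame_neg] with ⟨k, m⟩ h
    simpa using h
  · filter_upwards [(tendsto_snd.prodMk (hneg.comp tendsto_fst)).eventually hmixed] with ⟨k, m⟩ h
    simpa [eq_comm, abs_sub_comm] using h
  · filter_upwards [(tendsto_id.prodMap hneg).eventually hmixed] with ⟨k, m⟩ h
    simpa using h
  · exact hsame F hF

end Polynomial

/-- For a real polynomial of degree ≥ 2, γ'(v) = ∞ for every v: for every M > 0 there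
is a finite W ⊆ Λ(v) such that distinct points of Λ(v) \ W are at distance ≥ M. -/
theorem stmt_12 (P : Polynomial ℝ) (hdeg : 2 ≤ P.natDegree) :
    ∀ v : ℝ, ∀ M : ℝ, 0 < M →
      ∃ W : Finset ℝ, ↑W ⊆ LamV (fun k => P.eval (k : ℝ)) v ∧
        ∀ a ∈ LamV (fun k => P.eval (k : ℝ)) v \ ↑W,
          ∀ b ∈ LamV (fun k => P.eval (k : ℝ)) v \ ↑W, a ≠ b → M ≤ |a - b| := by
  intro v M hM
  set F := P - C v * X
  have hF : 2 ≤ F.natDegree := by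
    rwa [natDegree_sub_eq_left_of_natDegree_lt]
    exact ((natDegree_C_mul_le v X).trans natDegree_X_le).trans_lt (by omega)
  have hlam : lamk (fun k => P.eval (k : ℝ)) v = fun k : ℤ => F.eval (k : ℝ) := by
    ext k; simp only [lamk, F, eval_sub, eval_mul, eval_C, eval_X]; ring
  obtain ⟨t, ht, hsep⟩ :=
    mem_prod_self_iff.1 (eventually_cofinite_eval_eq_or_le_abs_eval_sub F hF hM.le)
  have hfin : (tᶜ : Set ℤ).Finite := ht
  set W := hfin.toFinset.image (lamk (fun k => P.eval (k : ℝ)) v)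
  have hmem : ∀ j, lamk (fun k => P.eval (k : ℝ)) v j ∉ W → j ∈ t :=
    fun j hj => by_contra fun hjt => hj (Finset.mem_image_of_mem _ (hfin.mem_toFinset.2 hjt))
  refine ⟨W, by rw [Finset.coe_image]; exact image_subset_range _ _, ?_⟩
  rintro _ ⟨⟨k, rfl⟩, hk⟩ _ ⟨⟨m, rfl⟩, hm⟩ hne
  rw [hlam] at hne ⊢
  exact (hsep (show (k, m) ∈ t ×ˢ t from ⟨hmem k hk, hmem m hm⟩)).resolve_left hne
end

section
/- Let p be a real polynomial with degree deg p > 2 and let v_1 ≠ v_2 be real numbers. Then g(v_1,v_2) < ∞; that is, there is a finite uniform bound on the number of vertices of every connected component of the graph G(v_1,v_2). -/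
open MeasureTheory Real Complex
open scoped ENNReal

section AuxStmt13
open Polynomial


lemma aux_pow (e : ℕ) {x y : ℝ} (hy : 0 ≤ y) (hxy : y ≤ x) :
    (x - y) * x ^ e ≤ x ^ (e+1) - y ^ (e+1) := by
  have h := pow_le_pow_left₀ hy hxy e
  have hx : 0 ≤ x := hy.trans hxy
  have := mul_nonneg hy (sub_nonneg.2 h)
  simp only [pow_succ]
  nlinarith [pow_nonneg hx e, pow_nonneg hy e]

lemma poly_tail (Q : ℝ[X]) : ∃ C : ℝ, 0 ≤ C ∧ ∀ x : ℝ, 1 ≤ |x| →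
    |Q.eval x - Q.leadingCoeff * x ^ Q.natDegree| ≤ C * |x| ^ (Q.natDegree - 1) := by
  refine ⟨∑ j ∈ Finset.range Q.natDegree, |Q.coeff j|,
    Finset.sum_nonneg (fun _ _ => _root_.abs_nonneg _), fun x hx => ?_⟩
  have h1 : Q.eval x = ∑ i ∈ Finset.range (Q.natDegree + 1), Q.coeff i * x ^ i :=
    Polynomial.eval_eq_sum_range x
  rw [h1, Finset.sum_range_succ, Polynomial.coeff_natDegree, add_sub_cancel_right]
  calc |∑ i ∈ Finset.range Q.natDegree, Q.coeff i * x ^ i|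
      ≤ ∑ i ∈ Finset.range Q.natDegree, |Q.coeff i * x ^ i| :=
        Finset.abs_sum_le_sum_abs _ _
    _ ≤ ∑ i ∈ Finset.range Q.natDegree, |Q.coeff i| * |x| ^ (Q.natDegree - 1) := by
        refine Finset.sum_le_sum fun i hi => ?_
        rw [_root_.abs_mul, _root_.abs_pow]
        refine mul_le_mul_of_nonneg_left ?_ (_root_.abs_nonneg _)
        have : i < Q.natDegree := Finset.mem_range.mp hi
        exact pow_le_pow_right₀ hx (by omega)
    _ = (∑ j ∈ Finset.range Q.natDegree, |Q.coeff j|) * |x| ^ (Q.natDegree - 1) := by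
        rw [Finset.sum_mul]

lemma evbound (Q : ℝ[X]) (hQ : Q ≠ 0) : ∃ M : ℝ, 1 ≤ M ∧ ∀ x : ℝ, M ≤ |x| → Q.eval x ≠ 0 := by
  obtain ⟨B, hB⟩ := ((Polynomial.finite_setOf_isRoot hQ).image (fun z : ℝ => |z|)).bddAbove
  refine ⟨max 1 (B+1), le_max_left _ _, fun x hx hroot => ?_⟩
  have : |x| ≤ B := hB ⟨x, hroot, rfl⟩
  have := le_trans (le_max_right 1 (B+1)) hx
  linarith

lemma int_level_finite (Q : ℝ[X]) (hQ : Q ≠ 0) : {m : ℤ | Q.eval (m:ℝ) = 0}.Finite := by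
  have h : {m : ℤ | Q.eval (m:ℝ) = 0} = (fun m : ℤ => (m:ℝ)) ⁻¹' {x | Q.IsRoot x} := rfl
  rw [h]
  exact Set.Finite.preimage (fun a _ b _ h => Int.cast_injective h)
    (Polynomial.finite_setOf_isRoot hQ)

noncomputable def Qp (P : ℝ[X]) (v : ℝ) : ℝ[X] := P - C v * X

lemma Qp_natDegree (P : ℝ[X]) (hdeg : 2 < P.natDegree) (v : ℝ) :
    (Qp P v).natDegree = P.natDegree := by
  apply natDegree_sub_eq_left_of_natDegree_lt
  calc (C v * X).natDegree ≤ X.natDegree := natDegree_C_mul_le v X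
    _ = 1 := natDegree_X
    _ < P.natDegree := by omega

lemma Qp_leadingCoeff (P : ℝ[X]) (hdeg : 2 < P.natDegree) (v : ℝ) :
    (Qp P v).leadingCoeff = P.leadingCoeff := by
  rw [leadingCoeff, Qp_natDegree P hdeg v, Qp, coeff_sub, coeff_C_mul, coeff_X,
    if_neg (by omega), leadingCoeff]
  ring

lemma samesign (P : ℝ[X]) (hdeg : 2 < P.natDegree) (v : ℝ) :
    ∃ M : ℝ, 1 ≤ M ∧ ∀ x y : ℝ, M ≤ |x| → M ≤ |y| → x < y → (0 < x ∨ y < 0) →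
      (Qp P v).eval x ≠ (Qp P v).eval y := by
  have hQd : (Qp P v).natDegree = P.natDegree := Qp_natDegree P hdeg v
  have hD0 : derivative (Qp P v) ≠ 0 := by
    intro hc
    have := natDegree_eq_zero_of_derivative_eq_zero hc
    omega
  obtain ⟨M, hM1, hM⟩ := evbound _ hD0
  refine ⟨M, hM1, fun x y hx hy hxy hsgn heq => ?_⟩
  obtain ⟨ξ, hξ, hslope⟩ := exists_hasDerivAt_eq_slope
    (fun z => (Qp P v).eval z) (fun z => (derivative (Qp P v)).eval z) hxy
    ((Qp P v).continuous.continuousOn) (fun z _ => (Qp P v).hasDerivAt z)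
  have hz : M ≤ |ξ| := by
    rcases hsgn with h | h
    · have hxpos : |x| = x := _root_.abs_of_pos h
      have : x < ξ := hξ.1
      rw [_root_.abs_of_pos (by linarith [hx, hM1])]
      rw [hxpos] at hx; linarith
    · have hyneg : |y| = -y := _root_.abs_of_neg h
      have : ξ < y := hξ.2
      rw [_root_.abs_of_neg (by linarith [hy, hM1])]
      rw [hyneg] at hy; linarith
  apply hM ξ hz
  rw [hslope, heq, sub_self, zero_div]

lemma oppsign (P : ℝ[X]) (hdeg : 2 < P.natDegree) (v : ℝ) :
    ∃ M T : ℝ, 1 ≤ M ∧ 0 ≤ T ∧ ∀ k m : ℤ,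
      (Qp P v).eval (k:ℝ) = (Qp P v).eval (m:ℝ) → M ≤ (k:ℝ) → (m:ℝ) ≤ -M →
      |(k:ℝ) + (m:ℝ)| ≤ T := by
  have hQd : (Qp P v).natDegree = P.natDegree := Qp_natDegree P hdeg v
  have hQl : (Qp P v).leadingCoeff = P.leadingCoeff := Qp_leadingCoeff P hdeg v
  set a := P.leadingCoeff with ha
  have hP0 : P ≠ 0 := fun hc => by simp [hc] at hdeg
  have ha0 : a ≠ 0 := leadingCoeff_ne_zero.mpr hP0
  have haa : 0 < |a| := _root_.abs_pos.mpr ha0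
  obtain ⟨C, hC0, hC⟩ := poly_tail (Qp P v)
  obtain ⟨e, he⟩ : ∃ e : ℕ, P.natDegree = e + 1 := ⟨P.natDegree - 1, by omega⟩
  have he2 : 2 ≤ e := by omega
  set T : ℝ := 2 * C / |a| with hT
  have hT0 : 0 ≤ T := by positivity
  refine ⟨T + 1, T, by linarith, hT0, fun k m heq hk hm => ?_⟩
  set x : ℝ := (k:ℝ)
  set y : ℝ := (m:ℝ)
  set n : ℝ := -y with hn
  have hx1 : 1 ≤ x := by linarith
  have hn1 : 1 ≤ n := by simp only [hn]; linarith
  set K : ℝ := max x n with hK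
  have hxK : x ≤ K := le_max_left _ _
  have hnK : n ≤ K := le_max_right _ _
  have hK1 : 1 ≤ K := le_trans hx1 hxK
  have h1 := hC x (by rw [_root_.abs_of_pos (by linarith)]; linarith)
  have h2 := hC y (by rw [_root_.abs_of_neg (by linarith : y < 0)]; linarith)
  rw [hQd, he, hQl] at h1 h2
  simp only [Nat.add_sub_cancel] at h1 h2
  rw [_root_.abs_of_pos (by linarith : (0:ℝ) < x)] at h1
  rw [_root_.abs_of_neg (by linarith : y < 0)] at h2
  have hxe : x ^ e ≤ K ^ e := pow_le_pow_left₀ (by linarith) hxK e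
  have hne : (-y) ^ e ≤ K ^ e := pow_le_pow_left₀ (by linarith) hnK e
  have hmain : |a * x ^ (e+1) - a * y ^ (e+1)| ≤ 2 * C * K ^ e := by
    have := _root_.abs_sub_abs_le_abs_sub ((Qp P v).eval x - a * x ^ (e+1)) 0
    calc |a * x ^ (e+1) - a * y ^ (e+1)|
        = |((Qp P v).eval y - a * y ^ (e+1)) - ((Qp P v).eval x - a * x ^ (e+1))| := by
          rw [heq]; ring_nf
      _ ≤ |(Qp P v).eval y - a * y ^ (e+1)| + |(Qp P v).eval x - a * x ^ (e+1)| :=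
          _root_.abs_sub _ _
      _ ≤ C * (-y) ^ e + C * x ^ e := add_le_add h2 h1
      _ ≤ 2 * C * K ^ e := by nlinarith
  have hKe : (0:ℝ) < K ^ e := by positivity
  rcases Nat.even_or_odd (e+1) with hpar | hpar
  · -- even degree: y^(e+1) = n^(e+1)
    have hyp : y ^ (e+1) = n ^ (e+1) := by
      rw [hn]; exact (Even.neg_pow hpar y).symm
    rw [hyp] at hmain
    have hfac : |x - n| * K ^ e ≤ |x ^ (e+1) - n ^ (e+1)| := by
      rcases le_total n x with hh | hh
      · have := aux_pow e (by linarith : (0:ℝ) ≤ n) hh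
        have hKx : K = x := max_eq_left hh
        rw [_root_.abs_of_nonneg (by linarith : (0:ℝ) ≤ x - n), hKx,
          _root_.abs_of_nonneg (by nlinarith [pow_le_pow_left₀ (by linarith : (0:ℝ) ≤ n) hh (e+1)])]
        exact this
      · have hax2 := aux_pow e (by linarith : (0:ℝ) ≤ x) hh
        have hKx : K = n := max_eq_right hh
        rw [_root_.abs_sub_comm x n, _root_.abs_sub_comm (x ^ (e+1)) (n ^ (e+1)),
          _root_.abs_of_nonneg (by linarith : (0:ℝ) ≤ n - x), hKx,
          _root_.abs_of_nonneg (by nlinarith [pow_le_pow_left₀ (by linarith : (0:ℝ) ≤ x) hh (e+1)] :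
            (0:ℝ) ≤ n ^ (e+1) - x ^ (e+1))]
        exact hax2
    have hax : |a| * (|x - n| * K ^ e) ≤ 2 * C * K ^ e := by
      calc |a| * (|x - n| * K ^ e) ≤ |a| * |x ^ (e+1) - n ^ (e+1)| :=
            mul_le_mul_of_nonneg_left hfac (_root_.abs_nonneg a)
        _ = |a * x ^ (e+1) - a * n ^ (e+1)| := by rw [← _root_.abs_mul, mul_sub]
        _ ≤ 2 * C * K ^ e := hmain
    have : |a| * |x - n| ≤ 2 * C := by
      have := le_of_mul_le_mul_right (by linarith [hax] : |a| * |x - n| * K ^ e ≤ 2 * C * K ^ e) hKe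
      exact this
    have hxy : x + y = x - n := by rw [hn]; ring
    rw [hxy, hT]
    rw [le_div_iff₀ haa]
    linarith [this]
  · -- odd degree: contradiction
    have hyp : y ^ (e+1) = -(n ^ (e+1)) := by
      rw [hn, Odd.neg_pow hpar]; ring
    rw [hyp] at hmain
    exfalso
    have hKes : K ^ (e+1) ≤ x ^ (e+1) + n ^ (e+1) := by
      have hxp : (0:ℝ) ≤ x ^ (e+1) := by positivity
      have hnp : (0:ℝ) ≤ n ^ (e+1) := by positivity
      rcases le_total x n with hh | hh
      · rw [hK, max_eq_right hh]; linarith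
      · rw [hK, max_eq_left hh]; linarith
    have habs : |a| * K ^ (e+1) ≤ 2 * C * K ^ e := by
      calc |a| * K ^ (e+1) ≤ |a| * (x ^ (e+1) + n ^ (e+1)) :=
            mul_le_mul_of_nonneg_left hKes (_root_.abs_nonneg a)
        _ = |a * x ^ (e+1) - a * (-(n ^ (e+1)))| := by
            have hr : a * x ^ (e+1) - a * (-(n ^ (e+1))) = a * (x ^ (e+1) + n ^ (e+1)) := by
              ring
            rw [hr, _root_.abs_mul, _root_.abs_of_nonneg (by positivity : (0:ℝ) ≤ x ^ (e+1) + n ^ (e+1))]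
        _ ≤ 2 * C * K ^ e := hmain
    have hKK : |a| * K ≤ 2 * C := by
      have h' : |a| * K * K ^ e ≤ 2 * C * K ^ e := by
        calc |a| * K * K ^ e = |a| * K ^ (e+1) := by ring
          _ ≤ 2 * C * K ^ e := habs
      exact le_of_mul_le_mul_right h' hKe
    have hKT : K ≤ T := by
      rw [hT, le_div_iff₀ haa]; linarith
    linarith

noncomputable def qq (P : ℝ[X]) (v : ℝ) (t : ℤ) : ℝ[X] :=
  Qp P v - (Qp P v).comp (C (t:ℝ) - X)

lemma Qp_eval (P : ℝ[X]) (v x : ℝ) : (Qp P v).eval x = P.eval x - v * x := by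
  simp [Qp]

-- second derivative symmetry from badness
lemma key_sym (P : ℝ[X]) (v : ℝ) (t : ℤ) (h : qq P v t = 0) :
    (derivative (derivative P)).comp (C (t:ℝ) - X) = derivative (derivative P) := by
  have hA : (P - C v * X).comp (C (t:ℝ) - X) = P - C v * X := by
    have := sub_eq_zero.mp h
    simpa [qq, Qp] using this.symm
  have e1 : P.comp (C (t:ℝ) - X) = P - (C v + C v) * X + C v * C (t:ℝ) := by
    simp only [sub_comp, mul_comp, C_comp, X_comp] at hA
    linear_combination hA
  have d1 := congrArg derivative e1
  simp only [derivative_comp, derivative_sub, derivative_add, derivative_mul,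
    derivative_C, derivative_X, zero_sub, zero_mul, mul_one, mul_zero, add_zero,
    zero_add, sub_zero] at d1
  have e2 : (derivative P).comp (C (t:ℝ) - X) = (C v + C v) - derivative P := by
    linear_combination -d1
  have d2 := congrArg derivative e2
  simp only [derivative_comp, derivative_sub, derivative_add, derivative_C,
    derivative_X, zero_sub, zero_add, sub_zero, neg_mul, one_mul, mul_one] at d2
  linear_combination -d2

lemma bad_unique (P : ℝ[X]) (hdeg : 2 < P.natDegree) (v v' : ℝ) (t t' : ℤ)
    (h : qq P v t = 0) (h' : qq P v' t' = 0) : t = t' := by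
  by_contra htt
  set P2 := derivative (derivative P) with hP2
  have k1 := key_sym P v t h
  have k2 := key_sym P v' t' h'
  have hcomp := congrArg (fun q => q.comp (C (t':ℝ) - X)) k1
  rw [comp_assoc] at hcomp
  have harg : (C (t:ℝ) - X).comp (C (t':ℝ) - X) = C ((t:ℝ) - (t':ℝ)) + X := by
    simp only [sub_comp, C_comp, X_comp, map_sub]
    ring
  rw [harg, k2] at hcomp
  -- hcomp : P2.comp (C u + X) = P2, u ≠ 0
  set u : ℝ := (t:ℝ) - (t':ℝ) with hu
  have hu0 : u ≠ 0 := sub_ne_zero.mpr (fun hc => htt (Int.cast_injective hc))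
  have hev : ∀ x : ℝ, P2.eval (u + x) = P2.eval x := by
    intro x
    have := congrArg (fun q => q.eval x) hcomp
    simpa [eval_comp] using this
  have hnd : ∀ n : ℕ, P2.eval ((n:ℝ) * u) = P2.eval 0 := by
    intro n
    induction n with
    | zero => simp
    | succ n ih =>
      have hh : ((n+1 : ℕ) : ℝ) * u = u + (n:ℝ) * u := by push_cast; ring
      rw [hh, hev, ih]
  have hR : P2 - C (P2.eval 0) = 0 := by
    apply Polynomial.eq_zero_of_infinite_isRoot
    apply Set.infinite_of_injective_forall_mem
      (f := fun n : ℕ => (n:ℝ) * u)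
    · intro n m hnm
      exact Nat.cast_injective (mul_right_cancel₀ hu0 hnm)
    · intro n
      simp [IsRoot, hnd n]
  have hC : P2 = C (P2.eval 0) := sub_eq_zero.mp hR
  have hd1 : (derivative P).natDegree = P.natDegree - 1 :=
    natDegree_eq_of_degree_eq_some (degree_derivative_eq P (by omega))
  have hd2 : P2.natDegree = P.natDegree - 2 := by
    rw [hP2, natDegree_eq_of_degree_eq_some (degree_derivative_eq (derivative P) (by omega)),
      hd1]
    omega
  have : P2.natDegree = 0 := by rw [hC]; exact natDegree_C _
  omega

lemma far_pairs (P : ℝ[X]) (hdeg : 2 < P.natDegree) (v1 v2 : ℝ) :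
    ∃ (M t0 : ℤ), 0 ≤ M ∧ ∀ v, (v = v1 ∨ v = v2) → ∀ k m : ℤ, k ≠ m →
      (Qp P v).eval (k:ℝ) = (Qp P v).eval (m:ℝ) → M < |k| → M < |m| → k + m = t0 := by
  classical
  obtain ⟨M1, hM1a, hS1⟩ := samesign P hdeg v1
  obtain ⟨M2, hM2a, hS2⟩ := samesign P hdeg v2
  obtain ⟨M3, T3, hM3a, hT3a, hO1⟩ := oppsign P hdeg v1
  obtain ⟨M4, T4, hM4a, hT4a, hO2⟩ := oppsign P hdeg v2
  set T0 : ℤ := ⌈max T3 T4⌉ with hT0def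
  have hSvFin : ∀ (v : ℝ) (t : ℤ),
      {k : ℤ | qq P v t ≠ 0 ∧ (qq P v t).eval (k:ℝ) = 0}.Finite := by
    intro v t
    by_cases h0 : qq P v t = 0
    · simp [h0]
    · exact (int_level_finite _ h0).subset (fun k hk => hk.2)
  set Z : Set ℤ := ⋃ t ∈ Finset.Icc (-T0) T0,
      ({k : ℤ | qq P v1 t ≠ 0 ∧ (qq P v1 t).eval (k:ℝ) = 0} ∪
       {k : ℤ | qq P v2 t ≠ 0 ∧ (qq P v2 t).eval (k:ℝ) = 0}) with hZdef
  have hZfin : Z.Finite :=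
    Set.Finite.biUnion (Finset.Icc (-T0) T0).finite_toSet
      (fun t _ => (hSvFin v1 t).union (hSvFin v2 t))
  obtain ⟨B, hB⟩ := (hZfin.image (fun z => |z|)).bddAbove
  set Mc : ℤ := ⌈max (max M1 M2) (max M3 M4)⌉ with hMcdef
  set M : ℤ := max B Mc with hMdef
  have hMcpos : (1:ℤ) ≤ Mc := by
    have : (0:ℝ) < max (max M1 M2) (max M3 M4) := by
      have := le_max_left M1 M2
      have := le_max_left (max M1 M2) (max M3 M4)
      linarith
    exact Int.ceil_pos.mpr this
  have hMpos : (0:ℤ) ≤ M := le_trans (by omega) (le_max_right B Mc)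
  have hMr : max (max M1 M2) (max M3 M4) ≤ (M:ℝ) := by
    calc max (max M1 M2) (max M3 M4) ≤ (Mc:ℝ) := Int.le_ceil _
      _ ≤ (M:ℝ) := Int.cast_le.mpr (le_max_right B Mc)
  set t0 : ℤ := if h : ∃ t : ℤ, qq P v1 t = 0 ∨ qq P v2 t = 0 then h.choose else 0
    with ht0def
  refine ⟨M, t0, hMpos, ?_⟩
  intro v hv k m hne heq hk hm
  -- helper for opposite signs
  have opp : ∀ k' m' : ℤ, (Qp P v).eval (k':ℝ) = (Qp P v).eval (m':ℝ) →
      (M:ℝ) < (k':ℝ) → (m':ℝ) < -(M:ℝ) → k' + m' = t0 := by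
    intro k' m' heq' hk' hm'
    have hMk3 : max M3 M4 ≤ (M:ℝ) := le_trans (le_max_right _ _) hMr
    have habsT : |(k':ℝ) + (m':ℝ)| ≤ max T3 T4 := by
      rcases hv with rfl | rfl
      · exact le_trans (hO1 k' m' heq'
          (by linarith [le_max_left M3 M4]) (by linarith [le_max_left M3 M4]))
          (le_max_left _ _)
      · exact le_trans (hO2 k' m' heq'
          (by linarith [le_max_right M3 M4]) (by linarith [le_max_right M3 M4]))
          (le_max_right _ _)
    have htT0 : |k' + m'| ≤ T0 := by
      have h1 : |((k' + m' : ℤ) : ℝ)| ≤ ((T0 : ℤ) : ℝ) := by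
        push_cast
        exact le_trans habsT (Int.le_ceil _)
      rw [← Int.cast_abs] at h1
      exact_mod_cast h1
    have heval : (qq P v (k' + m')).eval (k':ℝ) = 0 := by
      simp only [qq, eval_sub, eval_comp, eval_C, eval_X]
      have h2 : (((k' + m' : ℤ)):ℝ) - (k':ℝ) = (m':ℝ) := by push_cast; ring
      rw [h2, heq', sub_self]
    by_cases hq0 : qq P v (k' + m') = 0
    · have hex : ∃ t : ℤ, qq P v1 t = 0 ∨ qq P v2 t = 0 := by
        rcases hv with rfl | rfl
        · exact ⟨k' + m', Or.inl hq0⟩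
        · exact ⟨k' + m', Or.inr hq0⟩
      rw [ht0def, dif_pos hex]
      rcases hex.choose_spec with hc | hc
      · exact bad_unique P hdeg v v1 _ _ hq0 hc
      · exact bad_unique P hdeg v v2 _ _ hq0 hc
    · exfalso
      have hmem : k' ∈ Z := by
        have hmemIcc : (k' + m') ∈ Finset.Icc (-T0) T0 := Finset.mem_Icc.mpr (_root_.abs_le.mp htT0)
        rw [hZdef]
        refine Set.mem_iUnion₂.mpr ⟨k' + m', hmemIcc, ?_⟩
        rcases hv with rfl | rfl
        · exact Or.inl ⟨hq0, heval⟩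
        · exact Or.inr ⟨hq0, heval⟩
      have hle : |k'| ≤ B := hB ⟨k', hmem, rfl⟩
      have hBM : B ≤ M := le_max_left B Mc
      have hkM : M < k' := by exact_mod_cast hk'
      have : k' ≤ |k'| := le_abs_self k'
      omega
  -- helper for same signs
  have hSS : ∀ x y : ℤ, x < y → ((0:ℝ) < (x:ℝ) ∨ (y:ℝ) < 0) →
      (M:ℝ) ≤ |(x:ℝ)| → (M:ℝ) ≤ |(y:ℝ)| →
      (Qp P v).eval (x:ℝ) ≠ (Qp P v).eval (y:ℝ) := by
    intro x y hxy hsgn hx hy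
    have h12 : max M1 M2 ≤ (M:ℝ) := le_trans (le_max_left _ _) hMr
    rcases hv with rfl | rfl
    · exact hS1 _ _ (by linarith [le_max_left M1 M2]) (by linarith [le_max_left M1 M2])
        (by exact_mod_cast hxy) hsgn
    · exact hS2 _ _ (by linarith [le_max_right M1 M2]) (by linarith [le_max_right M1 M2])
        (by exact_mod_cast hxy) hsgn
  have hcast : ∀ z : ℤ, M < |z| → (M:ℝ) ≤ |(z:ℝ)| := by
    intro z hz
    have : ((M:ℤ):ℝ) ≤ ((|z| : ℤ):ℝ) := Int.cast_le.mpr (by omega)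
    rwa [Int.cast_abs] at this
  rcases lt_trichotomy k 0 with hkneg | hkz | hkpos
  · rcases lt_trichotomy m 0 with hmneg | hmz | hmpos
    · -- both negative
      exfalso
      rcases hne.lt_or_gt with h | h
      · exact hSS k m h (Or.inr (by exact_mod_cast hmneg)) (hcast k hk) (hcast m hm) heq
      · exact hSS m k h (Or.inr (by exact_mod_cast hkneg)) (hcast m hm) (hcast k hk) heq.symm
    · simp [hmz] at hm; omega
    · -- k neg, m pos
      have h := opp m k heq.symm (by
          rw [_root_.abs_of_pos hmpos] at hm; exact_mod_cast hm) (by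
          rw [_root_.abs_of_neg hkneg] at hk
          have : (k:ℝ) < -(M:ℝ) := by exact_mod_cast (by omega : k < -M)
          exact this)
      omega
  · simp [hkz] at hk; omega
  · rcases lt_trichotomy m 0 with hmneg | hmz | hmpos
    · -- k pos, m neg
      exact opp k m heq (by rw [_root_.abs_of_pos hkpos] at hk; exact_mod_cast hk) (by
        rw [_root_.abs_of_neg hmneg] at hm
        exact_mod_cast (by omega : m < -M))
    · simp [hmz] at hm; omega
    · -- both positive
      exfalso
      rcases hne.lt_or_gt with h | h
      · exact hSS k m h (Or.inl (by exact_mod_cast hkpos)) (hcast k hk) (hcast m hm) heq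
      · exact hSS m k h (Or.inl (by exact_mod_cast hmpos)) (hcast m hm) (hcast k hk) heq.symm

lemma Xi_finite (P : ℝ[X]) (hdeg : 2 < P.natDegree) (v : ℝ) (x : ℤ) :
    (XiSet (fun k : ℤ => P.eval (k:ℝ)) v x).Finite := by
  set c := lamk (fun k : ℤ => P.eval (k:ℝ)) v x with hc
  have hQ0 : Qp P v - C c ≠ 0 := by
    intro hcon
    have h1 : P = C v * X + C c := by
      have h2 := sub_eq_zero.mp hcon
      rw [Qp] at h2
      linear_combination h2
    have h2 : (C v * X + C c).natDegree ≤ 1 := by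
      apply le_trans (natDegree_add_le _ _)
      exact max_le (le_trans (natDegree_C_mul_le _ _) natDegree_X.le)
        (by simp [natDegree_C])
    rw [← h1] at h2
    omega
  apply (int_level_finite _ hQ0).subset
  intro mm hmm
  simp only [XiSet, lamk, Set.mem_setOf_eq] at hmm
  simp only [Set.mem_setOf_eq, eval_sub, eval_C, Qp_eval]
  have hcval : c = P.eval (x:ℝ) - (x:ℝ) * v := by simp [hc, lamk]
  linarith [hmm]

/-- For a real polynomial of degree > 2 and v₁ ≠ v₂, g(v₁,v₂) < ∞: the sizes of the
connected components of G(v₁,v₂) are uniformly bounded. -/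
theorem stmt_13 (P : Polynomial ℝ) (hdeg : 2 < P.natDegree) (v1 v2 : ℝ) (hv : v1 ≠ v2) :
    gFinite (fun k => P.eval (k : ℝ)) v1 v2 := by
  classical
  set p : ℤ → ℝ := fun k : ℤ => P.eval (k:ℝ) with hp
  have hlamQ : ∀ (v : ℝ) (k : ℤ), lamk p v k = (Qp P v).eval (k:ℝ) := by
    intro v k
    simp only [lamk, Qp_eval, hp]
    ring
  obtain ⟨M, t0, hM0, hM⟩ := far_pairs P hdeg v1 v2
  have hXi : ∀ (v : ℝ) (x : ℤ), (XiSet p v x).Finite := fun v x => Xi_finite P hdeg v x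
  set NF : ℤ → Finset ℤ := fun x => (hXi v1 x).toFinset ∪ (hXi v2 x).toFinset with hNF
  have hNFmem : ∀ x z : ℤ, gadj p v1 v2 x z → z ∈ NF x := by
    rintro x z ⟨b, hne, hlam⟩
    simp only [hNF, Finset.mem_union, Set.Finite.mem_toFinset]
    cases b
    · simp only [Bool.false_eq_true, if_false] at hlam
      exact Or.inr hlam.symm
    · simp only [if_true] at hlam
      exact Or.inl hlam.symm
  set Core : Finset ℤ := Finset.Icc (-M) M with hCore
  set NB : Finset ℤ := Core.biUnion NF with hNB
  refine ⟨(Core.card + (NB.card + NB.card + 2)), ?_⟩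
  intro k0 _
  set U : Finset ℤ := ((Core ∪ NB) ∪ NB.image (fun z => t0 - z)) ∪ {k0, t0 - k0} with hU
  have hCoreMem : ∀ z : ℤ, z ∉ Core → M < |z| := by
    intro z hz
    by_contra hcon
    exact hz (Finset.mem_Icc.mpr (_root_.abs_le.mp (not_lt.mp hcon)))
  have hclosed : ∀ m, Relation.ReflTransGen (gadj p v1 v2) k0 m → m ∈ U := by
    intro m hm
    induction hm with
    | refl => simp [hU]
    | @tail b c hab hbc ih =>
      by_cases hc : c ∈ Core
      · simp only [hU, Finset.mem_union]
        exact Or.inl (Or.inl (Or.inl hc))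
      · have hcM := hCoreMem c hc
        by_cases hb : b ∈ Core
        · have hcNB : c ∈ NB := Finset.mem_biUnion.mpr ⟨b, hb, hNFmem b c hbc⟩
          simp only [hU, Finset.mem_union]
          exact Or.inl (Or.inl (Or.inr hcNB))
        · have hbM := hCoreMem b hb
          obtain ⟨bcol, hne, hlam⟩ := hbc
          have hbc' : b + c = t0 := by
            cases bcol
            · simp only [Bool.false_eq_true, if_false] at hlam
              rw [hlamQ, hlamQ] at hlam
              exact hM v2 (Or.inr rfl) b c hne hlam hbM hcM
            · simp only [if_true] at hlam
              rw [hlamQ, hlamQ] at hlam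
              exact hM v1 (Or.inl rfl) b c hne hlam hbM hcM
          simp only [hU, Finset.mem_union, Finset.mem_image, Finset.mem_insert,
            Finset.mem_singleton] at ih ⊢
          rcases ih with ((hbCore | hbNB) | hbIm) | (hbk0 | hbk0')
          · exact absurd hbCore hb
          · exact Or.inl (Or.inr ⟨b, hbNB, by omega⟩)
          · obtain ⟨w, hw, hwb⟩ := hbIm
            have hcw : c = w := by omega
            exact Or.inl (Or.inl (Or.inr (hcw ▸ hw)))
          · exact Or.inr (Or.inr (by omega))
          · exact Or.inr (Or.inl (by omega))
  have hsub : {m | Relation.ReflTransGen (gadj p v1 v2) k0 m} ⊆ (U : Set ℤ) :=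
    fun m hm => hclosed m hm
  refine ⟨Set.Finite.subset U.finite_toSet hsub, ?_⟩
  calc {m | Relation.ReflTransGen (gadj p v1 v2) k0 m}.ncard
      ≤ (U : Set ℤ).ncard := Set.ncard_le_ncard hsub U.finite_toSet
    _ = U.card := Set.ncard_coe_finset U
    _ ≤ (Core.card + (NB.card + NB.card + 2)) := by
        have h1 : U.card ≤ ((Core ∪ NB) ∪ NB.image (fun z => t0 - z)).card
            + ({k0, t0 - k0} : Finset ℤ).card := Finset.card_union_le _ _
        have h2 : ((Core ∪ NB) ∪ NB.image (fun z => t0 - z)).card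
            ≤ (Core ∪ NB).card + (NB.image (fun z => t0 - z)).card :=
          Finset.card_union_le _ _
        have h3 : (Core ∪ NB).card ≤ Core.card + NB.card := Finset.card_union_le _ _
        have h4 : (NB.image (fun z => t0 - z)).card ≤ NB.card := Finset.card_image_le
        have h5 : ({k0, t0 - k0} : Finset ℤ).card ≤ 2 :=
          le_trans (Finset.card_insert_le _ _) (by simp)
        omega


end AuxStmt13
end
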